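/- arXiv:1401.3503 — 8 statements merged into one kernel-verified Lean document; each statement's English description precedes it below -/
import Mathlib

section
/- Let z_1,…,z_{2n} be a representation of the quantum quaternion sphere relations on a complex Hilbert space H. Then ‖z_i‖ ≤ 1 for every i ∈ {1,…,2n}, and z_{2n} is a normal operator, i.e. z_{2n}* z_{2n} = z_{2n} z_{2n}*. -/
noncomputable section

variable {H : Type*} [NormedAddCommGroup H] [InnerProductSpace ℂ H] [CompleteSpace H]

/-- The adjoint of a bounded operator on a complex Hilbert space. -/
def adj (T : H →L[ℂ] H) : H →L[ℂ] H := ContinuousLinearMap.adjoint T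

/-- `i′ = 2n + 1 − i`. -/
def dualIdx (n i : ℕ) : ℕ := 2 * n + 1 - i

/-- `ρ_i = n + 1 − i` for `i ≤ n`, and `ρ_i = n − i` (that is, `−ρ_{i′}`) for `i > n`. -/
def rhoIdx (n i : ℕ) : ℤ := if i ≤ n then (n : ℤ) + 1 - (i : ℤ) else (n : ℤ) - (i : ℤ)

/-- `ε_i = 1` for `i ≤ n`, `ε_i = −1` for `i > n`. -/
def epsIdx (n i : ℕ) : ℤ := if i ≤ n then 1 else -1

/-- A representation of the quantum quaternion sphere relations on a complex Hilbert
space `H`: bounded operators `z 1, …, z (2n)` satisfying relations (R1)–(R8). -/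
structure QQSRep (q : ℝ) (n : ℕ) (z : ℕ → H →L[ℂ] H) : Prop where
  r1 : ∀ i j, 1 ≤ j → j < i → i ≤ 2 * n → i + j ≠ 2 * n + 1 →
      z i * z j = (q : ℂ) • (z j * z i)
  r2 : ∀ i, n < i → i ≤ 2 * n →
      z i * z (dualIdx n i) = ((q : ℂ) ^ 2) • (z (dualIdx n i) * z i)
        - ((1 - q ^ 2 : ℝ) : ℂ) • ∑ k ∈ Finset.Ioc i (2 * n),
            ((q : ℂ) ^ ((i : ℤ) - (k : ℤ))) • (z k * z (dualIdx n k))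
  r3 : ∀ i, 1 ≤ i → i ≤ 2 * n →
      adj (z i) * z (dualIdx n i) = ((q : ℂ) ^ 2) • (z (dualIdx n i) * adj (z i))
  r4 : ∀ i j, 1 ≤ i → i ≤ 2 * n → 1 ≤ j → j ≤ 2 * n → 2 * n + 1 < i + j → i ≠ j →
      adj (z i) * z j = (q : ℂ) • (z j * adj (z i))
  r5 : ∀ i j, 1 ≤ i → 1 ≤ j → i + j < 2 * n + 1 → i ≠ j →
      adj (z i) * z j = (q : ℂ) • (z j * adj (z i))
        + (((1 - q ^ 2 : ℝ) : ℂ) * ((epsIdx n i * epsIdx n j : ℤ) : ℂ)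
            * (q : ℂ) ^ (rhoIdx n i + rhoIdx n j)) • (z (dualIdx n i) * adj (z (dualIdx n j)))
  r6 : ∀ i, n < i → i ≤ 2 * n →
      adj (z i) * z i = z i * adj (z i)
        + ((1 - q ^ 2 : ℝ) : ℂ) • ∑ k ∈ Finset.Ioc i (2 * n), z k * adj (z k)
  r7 : ∀ i, 1 ≤ i → i ≤ n →
      adj (z i) * z i = z i * adj (z i)
        + (((1 - q ^ 2 : ℝ) : ℂ) * (q : ℂ) ^ (2 * rhoIdx n i)) •
            (z (dualIdx n i) * adj (z (dualIdx n i)))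
        + ((1 - q ^ 2 : ℝ) : ℂ) • ∑ k ∈ Finset.Ioc i (2 * n), z k * adj (z k)
  r8 : ∑ i ∈ Finset.Icc 1 (2 * n), z i * adj (z i) = 1

/-- Irreducibility: the only closed subspaces invariant under all `z i` and `(z i)*`
are `{0}` and `H`. -/
def QQSIrreducible (n : ℕ) (z : ℕ → H →L[ℂ] H) : Prop :=
  ∀ K : Submodule ℂ H, IsClosed (K : Set H) →
    (∀ i, 1 ≤ i → i ≤ 2 * n → ∀ h ∈ K, z i h ∈ K ∧ adj (z i) h ∈ K) →
    K = ⊥ ∨ K = ⊤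

/-! Relation (R8) says that the positive elements `z_k z_k*` add up to `1`, so each of them
lies below `1`; the C*-identity `‖z‖² = ‖z z*‖` turns this into `‖z_i‖ ≤ 1`. Relation (R6)
at the last index `i = 2n` has an empty correction sum, which is exactly normality of `z_{2n}`. -/

theorem CStarAlgebra.norm_le_one_of_sum_mul_star_eq_one {A ι : Type*} [CStarAlgebra A]
    [PartialOrder A] [StarOrderedRing A] {s : Finset ι} {a : ι → A}
    (h : ∑ k ∈ s, a k * star (a k) = 1) {i : ι} (hi : i ∈ s) : ‖a i‖ ≤ 1 := by
  have hle : a i * star (a i) ≤ 1 :=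
    h ▸ Finset.single_le_sum (fun k _ => mul_star_self_nonneg (a k)) hi
  have hsq : ‖a i‖ * ‖a i‖ ≤ 1 := by
    rw [← CStarRing.norm_self_mul_star]
    exact (CStarAlgebra.norm_le_one_iff_of_nonneg _ (mul_star_self_nonneg _)).mpr hle
  nlinarith [norm_nonneg (a i)]

namespace QQSRep

variable {q : ℝ} {n : ℕ} {z : ℕ → H →L[ℂ] H}

theorem norm_le_one (hz : QQSRep q n z) {i : ℕ} (hi1 : 1 ≤ i) (hi2 : i ≤ 2 * n) :
    ‖z i‖ ≤ 1 :=
  CStarAlgebra.norm_le_one_of_sum_mul_star_eq_one hz.r8 (Finset.mem_Icc.mpr ⟨hi1, hi2⟩)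

theorem adj_mul_self_last (hz : QQSRep q n z) (hn : 1 ≤ n) :
    adj (z (2 * n)) * z (2 * n) = z (2 * n) * adj (z (2 * n)) := by
  simpa using hz.r6 (2 * n) (by omega) le_rfl

end QQSRep

theorem stmt_2_general (q : ℝ) (n : ℕ) (hn : 1 ≤ n)
    (z : ℕ → H →L[ℂ] H) (hz : QQSRep q n z) :
    (∀ i, 1 ≤ i → i ≤ 2 * n → ‖z i‖ ≤ 1) ∧
      adj (z (2 * n)) * z (2 * n) = z (2 * n) * adj (z (2 * n)) :=
  ⟨fun _ => hz.norm_le_one, hz.adj_mul_self_last hn⟩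

theorem stmt_2 (q : ℝ) (hq0 : 0 < q) (hq1 : q < 1) (n : ℕ) (hn : 1 ≤ n)
    (z : ℕ → H →L[ℂ] H) (hz : QQSRep q n z) :
    (∀ i, 1 ≤ i → i ≤ 2 * n → ‖z i‖ ≤ 1) ∧
      adj (z (2 * n)) * z (2 * n) = z (2 * n) * adj (z (2 * n)) :=
  stmt_2_general q n hn z hz
end
end

section
/- Let z_1,…,z_{2n} be a representation of the quantum quaternion sphere relations on a complex Hilbert space H, and write ω = z_{2n}* z_{2n}. Then for every i ∉ {1, 2n} one has z_i ω = q^{−2} ω z_i and z_i* ω = q² ω z_i*, while z_1 ω = q^{−4} ω z_1 and z_1* ω = q⁴ ω z_1*. -/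
noncomputable section

variable {H : Type*} [NormedAddCommGroup H] [InnerProductSpace ℂ H] [CompleteSpace H]

/-! If `z (2n)` and its adjoint both `c`-commute with `x`, then `ω = z (2n)* z (2n)` does so with
factor `c²`: `c = q` for `x = z i` with `i ∉ {1, 2n}` by (R1), (R4), and `c = q²` for `x = z 1` by (R2),
(R3), whose sums are empty at `i = 2n`. Since `ω` is self-adjoint and `q` real, taking adjoints gives the
relations for `z i*`. -/

lemma adj_eq_star (T : H →L[ℂ] H) : adj T = star T :=
  (ContinuousLinearMap.star_eq_adjoint T).symm

section QCommute

variable {R A : Type*} [Semiring A]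

theorem mul_mul_eq_smul_of_mul_eq_smul [CommSemiring R] [Algebra R A] {a b x : A} {c d : R}
    (ha : a * x = c • (x * a)) (hb : b * x = d • (x * b)) :
    b * a * x = (c * d) • (x * (b * a)) := by
  rw [mul_assoc, ha, mul_smul_comm, ← mul_assoc, hb, smul_mul_assoc, smul_smul, mul_assoc]

theorem mul_eq_inv_smul_of_mul_eq_smul [Field R] [Algebra R A] {w x : A} {c : R} (hc : c ≠ 0)
    (h : w * x = c • (x * w)) : x * w = c⁻¹ • (w * x) := by
  rw [eq_inv_smul_iff₀ hc, h]

theorem star_mul_eq_smul_of_mul_eq_smul [CommSemiring R] [StarRing R] [Algebra R A] [StarRing A]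
    [StarModule R A] {w x : A} {c : R} (hw : IsSelfAdjoint w) (hc : IsSelfAdjoint c)
    (h : w * x = c • (x * w)) : star x * w = c • (w * star x) := by
  simpa only [star_mul, star_smul, hw.star_eq, hc.star_eq] using congrArg star h

end QCommute

namespace QQSRep

variable {q : ℝ} {n : ℕ} {z : ℕ → H →L[ℂ] H}

theorem star_mul_self_mul_eq_of_ne (hz : QQSRep q n z) {i : ℕ} (hi1 : 1 ≤ i) (hi2n : i ≤ 2 * n)
    (hne1 : i ≠ 1) (hne2n : i ≠ 2 * n) :
    star (z (2 * n)) * z (2 * n) * z i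
      = ((q : ℂ) ^ (2 : ℤ)) • (z i * (star (z (2 * n)) * z (2 * n))) := by
  have hcomm := hz.r1 (2 * n) i hi1 (by omega) le_rfl (by omega)
  have hstar := hz.r4 (2 * n) i (by omega) le_rfl hi1 hi2n (by omega) (by omega)
  rw [adj_eq_star] at hstar
  rw [mul_mul_eq_smul_of_mul_eq_smul hcomm hstar, zpow_two]

theorem star_mul_self_mul_eq_first (hz : QQSRep q n z) (hn : 1 ≤ n) :
    star (z (2 * n)) * z (2 * n) * z 1
      = ((q : ℂ) ^ (4 : ℤ)) • (z 1 * (star (z (2 * n)) * z (2 * n))) := by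
  have hdual : dualIdx n (2 * n) = 1 := by unfold dualIdx; omega
  have hcomm := hz.r2 (2 * n) (by omega) le_rfl
  have hstar := hz.r3 (2 * n) (by omega) le_rfl
  rw [hdual, Finset.Ioc_self, Finset.sum_empty, smul_zero, sub_zero] at hcomm
  rw [hdual, adj_eq_star] at hstar
  rw [mul_mul_eq_smul_of_mul_eq_smul hcomm hstar, ← pow_add]
  norm_cast

end QQSRep

theorem stmt_3_general (q : ℝ) (hq0 : 0 < q) (n : ℕ) (hn : 1 ≤ n)
    (z : ℕ → H →L[ℂ] H) (hz : QQSRep q n z) :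
    (∀ i, 1 ≤ i → i ≤ 2 * n → i ≠ 1 → i ≠ 2 * n →
        z i * (adj (z (2 * n)) * z (2 * n))
            = ((q : ℂ) ^ (-2 : ℤ)) • ((adj (z (2 * n)) * z (2 * n)) * z i) ∧
        adj (z i) * (adj (z (2 * n)) * z (2 * n))
            = ((q : ℂ) ^ (2 : ℤ)) • ((adj (z (2 * n)) * z (2 * n)) * adj (z i))) ∧
    z 1 * (adj (z (2 * n)) * z (2 * n))
        = ((q : ℂ) ^ (-4 : ℤ)) • ((adj (z (2 * n)) * z (2 * n)) * z 1) ∧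
    adj (z 1) * (adj (z (2 * n)) * z (2 * n))
        = ((q : ℂ) ^ (4 : ℤ)) • ((adj (z (2 * n)) * z (2 * n)) * adj (z 1)) := by
  have hq : (q : ℂ) ≠ 0 := by exact_mod_cast hq0.ne'
  have hq_real : IsSelfAdjoint (q : ℂ) := Complex.conj_ofReal q
  have hω : IsSelfAdjoint (star (z (2 * n)) * z (2 * n)) := .star_mul_self _
  simp only [adj_eq_star, zpow_neg]
  refine ⟨fun i hi1 hi2n hne1 hne2n => ?_, ?_⟩
  · have hi := hz.star_mul_self_mul_eq_of_ne hi1 hi2n hne1 hne2n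
    exact ⟨mul_eq_inv_smul_of_mul_eq_smul (zpow_ne_zero 2 hq) hi,
      star_mul_eq_smul_of_mul_eq_smul hω (hq_real.zpow₀ 2) hi⟩
  · have h1 := hz.star_mul_self_mul_eq_first hn
    exact ⟨mul_eq_inv_smul_of_mul_eq_smul (zpow_ne_zero 4 hq) h1,
      star_mul_eq_smul_of_mul_eq_smul hω (hq_real.zpow₀ 4) h1⟩

theorem stmt_3 (q : ℝ) (hq0 : 0 < q) (hq1 : q < 1) (n : ℕ) (hn : 1 ≤ n)
    (z : ℕ → H →L[ℂ] H) (hz : QQSRep q n z) :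
    (∀ i, 1 ≤ i → i ≤ 2 * n → i ≠ 1 → i ≠ 2 * n →
        z i * (adj (z (2 * n)) * z (2 * n))
            = ((q : ℂ) ^ (-2 : ℤ)) • ((adj (z (2 * n)) * z (2 * n)) * z i) ∧
        adj (z i) * (adj (z (2 * n)) * z (2 * n))
            = ((q : ℂ) ^ (2 : ℤ)) • ((adj (z (2 * n)) * z (2 * n)) * adj (z i))) ∧
    z 1 * (adj (z (2 * n)) * z (2 * n))
        = ((q : ℂ) ^ (-4 : ℤ)) • ((adj (z (2 * n)) * z (2 * n)) * z 1) ∧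
    adj (z 1) * (adj (z (2 * n)) * z (2 * n))
        = ((q : ℂ) ^ (4 : ℤ)) • ((adj (z (2 * n)) * z (2 * n)) * adj (z 1)) :=
  stmt_3_general q hq0 n hn z hz
end
end

section
/- Let z_1,…,z_{2n} be a representation of the quantum quaternion sphere relations on a complex Hilbert space H, and write ω = z_{2n}* z_{2n}. Then for every m ∈ ℕ the spectrum of the (positive, self-adjoint) operator ω contains no point of the open interval (q^{2m+2}, q^{2m}); equivalently, the spectral projection 1_{(q^{2m+2}, q^{2m})}(ω) is zero for all m ∈ ℕ. -/
/-!
The operator `ω = z₂ₙ* z₂ₙ = z₂ₙ z₂ₙ*` is twisted by the other generators: `ω zⱼ = cⱼ zⱼ ω` for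
`j < 2n`, with `c₁ = q⁴` and `cⱼ = q²` otherwise. When `x / cⱼ ∉ σ(ω)` this factors
`zⱼ = (x - ω) uⱼ` and `zⱼ* = vⱼ (x - ω)`, so (R8), read as `1 = ω + ∑_{j<2n} zⱼ zⱼ*`, becomes
`1 - x = (x - ω) P (x - ω) - (x - ω)`, and `x - ω` has a left and a right inverse once `x ≠ 1`.
Since `0 ≤ ω ≤ 1` the spectrum misses `(1, ∞)`, and induction on `m` moves this down to every
interval `(q^(2m+2), q^(2m))`.
-/

noncomputable section

variable {H : Type*} [NormedAddCommGroup H] [InnerProductSpace ℂ H] [CompleteSpace H]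

section TwistedSpectrum

variable {𝕜 𝒜 : Type*} [Field 𝕜] [Ring 𝒜] [Algebra 𝕜 𝒜]

theorem isUnit_of_mul_eq_algebraMap {A L R : 𝒜} {c : 𝕜} (hc : c ≠ 0)
    (hR : A * R = algebraMap 𝕜 𝒜 c) (hL : L * A = algebraMap 𝕜 𝒜 c) : IsUnit A := by
  refine isUnit_iff_exists_and_exists.2 ⟨⟨R * algebraMap 𝕜 𝒜 c⁻¹, ?_⟩, ⟨algebraMap 𝕜 𝒜 c⁻¹ * L, ?_⟩⟩
  · rw [← mul_assoc, hR, ← map_mul, mul_inv_cancel₀ hc, map_one]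
  · rw [mul_assoc, hL, ← map_mul, inv_mul_cancel₀ hc, map_one]

theorem exists_eq_sub_mul_of_mul_eq_smul {ω a : 𝒜} {c x : 𝕜} (hc : c ≠ 0)
    (h : ω * a = c • (a * ω)) (hx : x / c ∉ spectrum 𝕜 ω) :
    ∃ u, a = (algebraMap 𝕜 𝒜 x - ω) * u := by
  obtain ⟨R, hR⟩ := (spectrum.notMem_iff.1 hx).exists_right_inv
  have hfactor : (algebraMap 𝕜 𝒜 x - ω) * a = c • (a * (algebraMap 𝕜 𝒜 (x / c) - ω)) := by
    rw [sub_mul, mul_sub, h, smul_sub, ← Algebra.commutes, ← Algebra.smul_def, ← Algebra.smul_def,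
      smul_smul, mul_div_cancel₀ x hc]
  refine ⟨c⁻¹ • (a * R), ?_⟩
  rw [mul_smul_comm, ← mul_assoc, hfactor, smul_mul_assoc, mul_assoc, hR, mul_one,
    inv_smul_smul₀ hc]

theorem exists_eq_mul_sub_of_mul_eq_smul {ω b : 𝒜} {c x : 𝕜} (hc : c ≠ 0)
    (h : b * ω = c • (ω * b)) (hx : x / c ∉ spectrum 𝕜 ω) :
    ∃ v, b = v * (algebraMap 𝕜 𝒜 x - ω) := by
  obtain ⟨L, hL⟩ := (spectrum.notMem_iff.1 hx).exists_left_inv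
  have hfactor : b * (algebraMap 𝕜 𝒜 x - ω) = c • ((algebraMap 𝕜 𝒜 (x / c) - ω) * b) := by
    rw [sub_mul, mul_sub, h, smul_sub, ← Algebra.commutes x b, ← Algebra.smul_def,
      ← Algebra.smul_def, smul_smul, mul_div_cancel₀ x hc]
  refine ⟨c⁻¹ • (L * b), ?_⟩
  rw [smul_mul_assoc, mul_assoc, hfactor, mul_smul_comm, ← mul_assoc, hL, one_mul,
    inv_smul_smul₀ hc]

theorem notMem_spectrum_of_add_sum_eq_one {ι : Type*} (s : Finset ι) {ω : 𝒜} {a b : ι → 𝒜}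
    (hsum : ω + ∑ j ∈ s, a j * b j = 1) {x : 𝕜} (hx : x ≠ 1)
    (ha : ∀ j ∈ s, ∃ u, a j = (algebraMap 𝕜 𝒜 x - ω) * u)
    (hb : ∀ j ∈ s, ∃ v, b j = v * (algebraMap 𝕜 𝒜 x - ω)) :
    x ∉ spectrum 𝕜 ω := by
  set A := algebraMap 𝕜 𝒜 x - ω
  choose! u hu using ha
  choose! v hv using hb
  set P := ∑ j ∈ s, u j * v j
  have hAPA : A * P * A = 1 - ω := by
    rw [← hsum, add_sub_cancel_left, Finset.mul_sum, Finset.sum_mul]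
    refine Finset.sum_congr rfl fun j hj => ?_
    rw [hu j hj, hv j hj]
    noncomm_ring
  have hunit : A * P * A - A = algebraMap 𝕜 𝒜 (1 - x) := by
    rw [hAPA, map_sub, map_one, sub_sub, add_sub_cancel]
  rw [spectrum.notMem_iff]
  refine isUnit_of_mul_eq_algebraMap (sub_ne_zero.2 hx.symm) (R := P * A - 1) (L := A * P - 1) ?_ ?_
  · rw [mul_sub, mul_one, ← mul_assoc, hunit]
  · rw [sub_mul, one_mul, hunit]

end TwistedSpectrum

theorem mul_mul_eq_smul_of_mul_eq_smul_s5 {𝕜 𝒜 : Type*} [CommSemiring 𝕜] [Semiring 𝒜] [Algebra 𝕜 𝒜]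
    {X Y W : 𝒜} {a b : 𝕜} (hX : X * W = a • (W * X)) (hY : Y * W = b • (W * Y)) :
    X * Y * W = (a * b) • (W * (X * Y)) := by
  rw [mul_assoc, hY, mul_smul_comm, ← mul_assoc, hX, smul_mul_assoc, smul_smul, mul_comm b a,
    mul_assoc]

theorem star_mul_eq_smul_of_mul_eq_smul_s5 {𝕜 𝒜 : Type*} [CommSemiring 𝕜] [StarRing 𝕜]
    [Semiring 𝒜] [StarRing 𝒜] [Module 𝕜 𝒜] [StarModule 𝕜 𝒜] {ω a : 𝒜} {c : 𝕜}
    (hω : IsSelfAdjoint ω) (hc : IsSelfAdjoint c) (h : ω * a = c • (a * ω)) :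
    star a * ω = c • (ω * star a) := by
  simpa only [star_mul, star_smul, hω.star_eq, hc.star_eq] using congrArg star h

theorem forall_mem_Ioo_pow_of_forall_div_pow {p : ℝ} (hp0 : 0 < p) (hp1 : p < 1) {P : ℝ → Prop}
    (hP : ∀ x, 1 < x → P x) (hstep : ∀ x, x < 1 → (∀ k, 1 ≤ k → P (x / p ^ k)) → P x) :
    ∀ m : ℕ, ∀ x ∈ Set.Ioo (p ^ (m + 1)) (p ^ m), P x := by
  intro m
  induction m using Nat.strong_induction_on with
  | _ m ih =>
  rintro x ⟨hlo, hhi⟩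
  refine hstep x (hhi.trans_le (pow_le_one₀ hp0.le hp1.le)) fun k hk => ?_
  have hpk : 0 < p ^ k := pow_pos hp0 k
  rcases le_or_gt k m with hkm | hmk
  · refine ih (m - k) (by omega) _ ⟨?_, ?_⟩
    · rw [lt_div_iff₀ hpk, ← pow_add, show m - k + 1 + k = m + 1 by omega]
      exact hlo
    · rw [div_lt_iff₀ hpk, ← pow_add, Nat.sub_add_cancel hkm]
      exact hhi
  · exact hP _ ((one_lt_div hpk).2 ((pow_le_pow_of_le_one hp0.le hp1.le hmk).trans_lt hlo))

namespace QQSRep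

variable {q : ℝ} {n : ℕ} {z : ℕ → H →L[ℂ] H}

lemma star_top_mul_top (hn : 1 ≤ n) (hz : QQSRep q n z) :
    star (z (2 * n)) * z (2 * n) = z (2 * n) * star (z (2 * n)) := by
  simpa [adj_eq_star] using hz.r6 (2 * n) (by omega) le_rfl

lemma star_top_mul_top_add_sum (hn : 1 ≤ n) (hz : QQSRep q n z) :
    star (z (2 * n)) * z (2 * n) + ∑ j ∈ Finset.Ico 1 (2 * n), z j * star (z j) = 1 := by
  rw [hz.star_top_mul_top hn, add_comm, ← Finset.sum_Ico_succ_top (by omega),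
    Finset.Ico_add_one_right_eq_Icc]
  simpa only [adj_eq_star] using hz.r8

lemma star_top_mul_top_le_one (hn : 1 ≤ n) (hz : QQSRep q n z) :
    star (z (2 * n)) * z (2 * n) ≤ 1 := by
  rw [← hz.star_top_mul_top_add_sum hn]
  exact le_add_of_nonneg_right (Finset.sum_nonneg fun j _ => mul_star_self_nonneg (z j))

lemma exists_star_top_mul_top_mul (hn : 1 ≤ n) (hz : QQSRep q n z) {j : ℕ}
    (hj : j ∈ Finset.Ico 1 (2 * n)) :
    ∃ k, 1 ≤ k ∧ star (z (2 * n)) * z (2 * n) * z j =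
      (((q ^ 2) ^ k : ℝ) : ℂ) • (z j * (star (z (2 * n)) * z (2 * n))) := by
  obtain ⟨hj1, hj2⟩ := Finset.mem_Ico.1 hj
  have hdual : dualIdx n (2 * n) = 1 := by unfold dualIdx; omega
  by_cases hj : j = 1
  · subst hj
    have h2 := hz.r2 (2 * n) (by omega) le_rfl
    have h3 := hz.r3 (2 * n) (by omega) le_rfl
    rw [hdual, Finset.Ioc_self, Finset.sum_empty, smul_zero, sub_zero] at h2
    rw [hdual, adj_eq_star] at h3
    refine ⟨2, one_le_two, ?_⟩
    rw [mul_mul_eq_smul_of_mul_eq_smul_s5 h3 h2]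
    push_cast
    ring_nf
  · have h1 := hz.r1 (2 * n) j hj1 hj2 le_rfl (by omega)
    have h4 := hz.r4 (2 * n) j (by omega) le_rfl hj1 (by omega) (by omega) (by omega)
    rw [adj_eq_star] at h4
    refine ⟨1, le_rfl, ?_⟩
    rw [mul_mul_eq_smul_of_mul_eq_smul_s5 h4 h1]
    push_cast
    ring_nf

lemma notMem_spectrum_of_one_lt (hn : 1 ≤ n) (hz : QQSRep q n z) {x : ℝ} (hx : 1 < x) :
    (x : ℂ) ∉ spectrum ℂ (star (z (2 * n)) * z (2 * n)) := by
  rw [← Complex.coe_algebraMap, spectrum.algebraMap_mem_iff]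
  intro hmem
  have := (CFC.le_one_iff (star (z (2 * n)) * z (2 * n))).1 (hz.star_top_mul_top_le_one hn) x hmem
  linarith

lemma notMem_spectrum_of_forall_div_pow (hq0 : 0 < q) (hn : 1 ≤ n) (hz : QQSRep q n z) {x : ℝ}
    (hx : x ≠ 1)
    (hdiv : ∀ k, 1 ≤ k →
      ((x / (q ^ 2) ^ k : ℝ) : ℂ) ∉ spectrum ℂ (star (z (2 * n)) * z (2 * n))) :
    (x : ℂ) ∉ spectrum ℂ (star (z (2 * n)) * z (2 * n)) := by
  refine notMem_spectrum_of_add_sum_eq_one _ (hz.star_top_mul_top_add_sum hn)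
    (by exact_mod_cast hx) (fun j hj => ?_) (fun j hj => ?_)
  all_goals
    obtain ⟨k, hk, htwist⟩ := hz.exists_star_top_mul_top_mul hn hj
    have hc : (((q ^ 2) ^ k : ℝ) : ℂ) ≠ 0 := by exact_mod_cast (pow_pos (pow_pos hq0 2) k).ne'
    have hxk : (x : ℂ) / ((q ^ 2) ^ k : ℝ) ∉ spectrum ℂ (star (z (2 * n)) * z (2 * n)) := by
      exact_mod_cast hdiv k hk
  · exact exists_eq_sub_mul_of_mul_eq_smul hc htwist hxk
  · exact exists_eq_mul_sub_of_mul_eq_smul hc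
      (star_mul_eq_smul_of_mul_eq_smul_s5 (.star_mul_self _) (Complex.conj_ofReal _) htwist) hxk

end QQSRep

theorem stmt_5 (q : ℝ) (hq0 : 0 < q) (hq1 : q < 1) (n : ℕ) (hn : 1 ≤ n)
    (z : ℕ → H →L[ℂ] H) (hz : QQSRep q n z) :
    ∀ m : ℕ, ∀ x : ℝ, q ^ (2 * m + 2) < x → x < q ^ (2 * m) →
      (x : ℂ) ∉ spectrum ℂ (adj (z (2 * n)) * z (2 * n)) := by
  intro m x hlo hhi
  rw [adj_eq_star]
  refine forall_mem_Ioo_pow_of_forall_div_pow (pow_pos hq0 2) (pow_lt_one₀ hq0.le hq1 two_ne_zero)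
    (fun x hx => hz.notMem_spectrum_of_one_lt hn hx)
    (fun x hx hdiv => hz.notMem_spectrum_of_forall_div_pow hq0 hn hx.ne hdiv) m x ⟨?_, ?_⟩
  · rwa [← pow_mul, mul_add, mul_one]
  · rwa [← pow_mul]
end
end

section
/- Let z_1,…,z_{2n} be a representation of the quantum quaternion sphere relations on a complex Hilbert space H. Then for every i ∈ {1,…,2n} and every k ≥ i one has ker z_i ⊆ ker z_k*; that is, if z_i h = 0 then z_k* h = 0 for all k ≥ i. -/
/-!
Pairing relation (R6) or (R7) for `z i` with a vector `h` gives
`‖z_i h‖² = ‖z_i* h‖² + (1 - q²) q^{2ρ_i} ‖z_{i′}* h‖² + (1 - q²) ∑_{k > i} ‖z_k* h‖²`,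
the middle term occurring only for `i ≤ n`. For `0 < q < 1` every term on the right is
nonnegative, so `z_i h = 0` forces all of them to vanish.
-/

noncomputable section

variable {H : Type*} [NormedAddCommGroup H] [InnerProductSpace ℂ H] [CompleteSpace H]

lemma re_inner_mul_adj_apply_self (T : H →L[ℂ] H) (h : H) :
    (inner ℂ ((T * adj T) h) h).re = ‖adj T h‖ ^ 2 := by
  rw [ContinuousLinearMap.apply_norm_sq_eq_inner_adjoint_left, adj,
    ContinuousLinearMap.adjoint_adjoint]
  rfl

lemma re_inner_adj_mul_apply_self (T : H →L[ℂ] H) (h : H) :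
    (inner ℂ ((adj T * T) h) h).re = ‖T h‖ ^ 2 :=
  (ContinuousLinearMap.apply_norm_sq_eq_inner_adjoint_left T h).symm

namespace QQSRep

variable {q : ℝ} {n : ℕ} {z : ℕ → H →L[ℂ] H}

lemma norm_sq_apply_of_lt (hz : QQSRep q n z) {i : ℕ} (hni : n < i) (hi : i ≤ 2 * n) (h : H) :
    ‖z i h‖ ^ 2 = ‖adj (z i) h‖ ^ 2
      + (1 - q ^ 2) * ∑ k ∈ Finset.Ioc i (2 * n), ‖adj (z k) h‖ ^ 2 := by
  have := congrArg (fun A : H →L[ℂ] H => (inner ℂ (A h) h).re) (hz.r6 i hni hi)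
  simpa only [add_apply, smul_apply, sum_apply, inner_add_left, inner_smul_left, sum_inner,
    Complex.conj_ofReal, Complex.add_re, Complex.re_ofReal_mul, Complex.re_sum,
    re_inner_mul_adj_apply_self, re_inner_adj_mul_apply_self] using this

lemma norm_sq_apply_of_le (hz : QQSRep q n z) {i : ℕ} (hi : 1 ≤ i) (hin : i ≤ n) (h : H) :
    ‖z i h‖ ^ 2 = ‖adj (z i) h‖ ^ 2
      + (1 - q ^ 2) * q ^ (2 * rhoIdx n i) * ‖adj (z (dualIdx n i)) h‖ ^ 2
      + (1 - q ^ 2) * ∑ k ∈ Finset.Ioc i (2 * n), ‖adj (z k) h‖ ^ 2 := by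
  have hcoef : ((1 - q ^ 2 : ℝ) : ℂ) * (q : ℂ) ^ (2 * rhoIdx n i)
      = (((1 - q ^ 2) * q ^ (2 * rhoIdx n i) : ℝ) : ℂ) := by push_cast; rfl
  have := congrArg (fun A : H →L[ℂ] H => (inner ℂ (A h) h).re) (hz.r7 i hi hin)
  simpa only [hcoef, add_apply, smul_apply, sum_apply, inner_add_left, inner_smul_left, sum_inner,
    Complex.conj_ofReal, Complex.add_re, Complex.re_ofReal_mul, Complex.re_sum,
    re_inner_mul_adj_apply_self, re_inner_adj_mul_apply_self] using this

lemma norm_sq_adj_add_sum_le (hz : QQSRep q n z) (hq : q ^ 2 ≤ 1) {i : ℕ} (hi : 1 ≤ i)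
    (hi' : i ≤ 2 * n) (h : H) :
    ‖adj (z i) h‖ ^ 2 + (1 - q ^ 2) * ∑ k ∈ Finset.Ioc i (2 * n), ‖adj (z k) h‖ ^ 2
      ≤ ‖z i h‖ ^ 2 := by
  rcases le_or_gt i n with hin | hni
  · have hdual : 0 ≤ (1 - q ^ 2) * q ^ (2 * rhoIdx n i) * ‖adj (z (dualIdx n i)) h‖ ^ 2 :=
      mul_nonneg (mul_nonneg (sub_nonneg.2 hq) ((even_two_mul _).zpow_nonneg q)) (sq_nonneg _)
    linarith [hz.norm_sq_apply_of_le hi hin h]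
  · exact (hz.norm_sq_apply_of_lt hni hi' h).ge

end QQSRep

theorem stmt_6_general (q : ℝ) (hq0 : 0 < q) (hq1 : q < 1) (n : ℕ)
    (z : ℕ → H →L[ℂ] H) (hz : QQSRep q n z) :
    ∀ i k, 1 ≤ i → i ≤ k → k ≤ 2 * n → ∀ h : H, z i h = 0 → adj (z k) h = 0 := by
  intro i k hi hik hk h hzi
  have hq : 0 < 1 - q ^ 2 := by nlinarith
  have hle := hz.norm_sq_adj_add_sum_le (sub_pos.1 hq).le hi (hik.trans hk) h
  rw [hzi, norm_zero, zero_pow two_ne_zero] at hle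
  have hsum : 0 ≤ ∑ m ∈ Finset.Ioc i (2 * n), ‖adj (z m) h‖ ^ 2 :=
    Finset.sum_nonneg fun m _ => sq_nonneg _
  have hsum0 : ∑ m ∈ Finset.Ioc i (2 * n), ‖adj (z m) h‖ ^ 2 = 0 := by
    nlinarith [sq_nonneg ‖adj (z i) h‖]
  suffices ‖adj (z k) h‖ ^ 2 = 0 by simpa using this
  rcases hik.eq_or_lt with rfl | hlt
  · nlinarith [sq_nonneg ‖adj (z i) h‖]
  · exact (Finset.sum_eq_zero_iff_of_nonneg fun m _ => sq_nonneg _).1 hsum0 k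
      (Finset.mem_Ioc.2 ⟨hlt, hk⟩)

theorem stmt_6 (q : ℝ) (hq0 : 0 < q) (hq1 : q < 1) (n : ℕ) (hn : 1 ≤ n)
    (z : ℕ → H →L[ℂ] H) (hz : QQSRep q n z) :
    ∀ i k, 1 ≤ i → i ≤ k → k ≤ 2 * n → ∀ h : H, z i h = 0 → adj (z k) h = 0 :=
  stmt_6_general q hq0 hq1 n z hz
end
end

section
/- Let z_1,…,z_{2n} be a representation of the quantum quaternion sphere relations on a complex Hilbert space H. If u ∈ ⋂_{i=1}^{2n−1} ker z_i* (i.e. z_i* u = 0 for all 1 ≤ i ≤ 2n−1), then z_{2n} u ∈ ⋂_{i=1}^{2n−1} ker z_i* and z_{2n}* u ∈ ⋂_{i=1}^{2n−1} ker z_i*. -/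
/-!
For `i < 2n`, relations (R3) and (R4) say that `z_i*` commutes with `z_{2n}` up to a scalar, and
(R1) and (R2) (whose correction sum is empty for `i = 2n`) say that `z_{2n}` commutes with `z_i`
up to a real scalar; taking adjoints, `z_i*` then also commutes with `z_{2n}*` up to that scalar.
Whenever `A B = c B A`, the kernel of `A` is invariant under `B`.
-/

noncomputable section

variable {H : Type*} [NormedAddCommGroup H] [InnerProductSpace ℂ H] [CompleteSpace H]

theorem ContinuousLinearMap.apply_apply_eq_zero_of_mul_eq_smul_mul {R M : Type*} [CommSemiring R]
    [TopologicalSpace M] [AddCommMonoid M] [Module R M] [ContinuousConstSMul R M]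
    {A B : M →L[R] M} {c : R} (h : A * B = c • (B * A)) {u : M} (hu : A u = 0) :
    A (B u) = 0 := by
  have := congrArg (· u) h
  simp only [mul_apply_eq_comp, smul_apply] at this
  rw [this, hu, map_zero, smul_zero]

theorem ContinuousLinearMap.adjoint_mul_adjoint_eq_smul {𝕜 E : Type*} [RCLike 𝕜]
    [NormedAddCommGroup E] [InnerProductSpace 𝕜 E] [CompleteSpace E]
    {A B : E →L[𝕜] E} {r : ℝ} (h : A * B = (r : 𝕜) • (B * A)) :
    adjoint B * adjoint A = (r : 𝕜) • (adjoint A * adjoint B) := by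
  simpa only [← ContinuousLinearMap.star_eq_adjoint, star_mul, star_smul, RCLike.star_def,
    RCLike.conj_ofReal] using congrArg star h

namespace QQSRep

variable {q : ℝ} {n : ℕ} {z : ℕ → H →L[ℂ] H}

theorem exists_adj_mul_last_eq_smul (hz : QQSRep q n z) {i : ℕ} (hi1 : 1 ≤ i) (hi : i < 2 * n) :
    ∃ c : ℂ, adj (z i) * z (2 * n) = c • (z (2 * n) * adj (z i)) := by
  rcases hi1.eq_or_lt with rfl | hi1
  · have hdual : dualIdx n 1 = 2 * n := by simp [dualIdx]
    exact ⟨_, hdual ▸ hz.r3 1 le_rfl (by omega)⟩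
  · exact ⟨_, hz.r4 i (2 * n) (by omega) (by omega) (by omega) le_rfl (by omega) (by omega)⟩

theorem exists_last_mul_eq_smul (hz : QQSRep q n z) {i : ℕ} (hi1 : 1 ≤ i) (hi : i < 2 * n) :
    ∃ r : ℝ, z (2 * n) * z i = (r : ℂ) • (z i * z (2 * n)) := by
  rcases hi1.eq_or_lt with rfl | hi1
  · have hdual : dualIdx n (2 * n) = 1 := by simp [dualIdx]
    have h := hz.r2 (2 * n) (by omega) le_rfl
    rw [hdual, Finset.Ioc_self, Finset.sum_empty, smul_zero, sub_zero] at h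
    exact ⟨q ^ 2, by exact_mod_cast h⟩
  · exact ⟨q, hz.r1 (2 * n) i (by omega) hi le_rfl (by omega)⟩

end QQSRep

theorem stmt_9_general (q : ℝ) (n : ℕ)
    (z : ℕ → H →L[ℂ] H) (hz : QQSRep q n z) :
    ∀ u : H, (∀ i, 1 ≤ i → i ≤ 2 * n - 1 → adj (z i) u = 0) →
      (∀ i, 1 ≤ i → i ≤ 2 * n - 1 → adj (z i) (z (2 * n) u) = 0) ∧
      (∀ i, 1 ≤ i → i ≤ 2 * n - 1 → adj (z i) (adj (z (2 * n)) u) = 0) := by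
  intro u hu
  refine ⟨fun i hi1 hi => ?_, fun i hi1 hi => ?_⟩
  · obtain ⟨c, hc⟩ := hz.exists_adj_mul_last_eq_smul hi1 (by omega)
    exact ContinuousLinearMap.apply_apply_eq_zero_of_mul_eq_smul_mul hc (hu i hi1 hi)
  · obtain ⟨r, hr⟩ := hz.exists_last_mul_eq_smul hi1 (by omega)
    exact ContinuousLinearMap.apply_apply_eq_zero_of_mul_eq_smul_mul
      (ContinuousLinearMap.adjoint_mul_adjoint_eq_smul hr) (hu i hi1 hi)

theorem stmt_9 (q : ℝ) (hq0 : 0 < q) (hq1 : q < 1) (n : ℕ) (hn : 1 ≤ n)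
    (z : ℕ → H →L[ℂ] H) (hz : QQSRep q n z) :
    ∀ u : H, (∀ i, 1 ≤ i → i ≤ 2 * n - 1 → adj (z i) u = 0) →
      (∀ i, 1 ≤ i → i ≤ 2 * n - 1 → adj (z i) (z (2 * n) u) = 0) ∧
      (∀ i, 1 ≤ i → i ≤ 2 * n - 1 → adj (z i) (adj (z (2 * n)) u) = 0) :=
  stmt_9_general q n z hz
end
end

section
/- Let z_1,…,z_{2n} be an irreducible representation of the quantum quaternion sphere relations on a complex Hilbert space H with z_{2n} ≠ 0. Let K be a linear subspace of ⋂_{i=1}^{2n−1} ker z_i* that is invariant under both z_{2n} and z_{2n}*. Define H^K to be the linear span of all vectors z_1^{α_1} z_2^{α_2} ⋯ z_{2n−1}^{α_{2n−1}} h with h ∈ K and (α_1,…,α_{2n−1}) ∈ ℕ^{2n−1}. Then H^K is invariant under z_i and z_i* for every i ∈ {1,…,2n}. -/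
/-!
Let `S` be the span of the words `z_1^{α_1} ⋯ z_{2n-1}^{α_{2n-1}} h`, `h ∈ K`. For `j ≤ n`, `z j`
`q`-commutes with every `z k`, `k < j`, so it moves to its own slot of a word. For `i > n` one
argues by downward induction on `i`: `z i` `q`-commutes with the letters before `z_{i′}` and is
absorbed by the letters after it, while (R2) trades `z i z_{i′}` for `z_{i′} z i` plus terms
`z k z_{k′}` with `k > i`.

For the adjoints, `S` is the smallest subspace containing `K` and stable under
`z_1, …, z_{2n-1}`. So, by downward induction on `i` again, it suffices that `z i*` maps `K` into
`S`, which is the hypothesis on `K`, and that `z i* z j v ∈ S` whenever `v ∈ S` and `z l* v ∈ S`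
for all `l ≥ i`, which is what (R3)–(R7) give.
-/

noncomputable section

variable {H : Type*} [NormedAddCommGroup H] [InnerProductSpace ℂ H] [CompleteSpace H]

/-- The monomial operator `z_1^{α 1} z_2^{α 2} ⋯ z_m^{α m}`. -/
def wordOp (z : ℕ → H →L[ℂ] H) (m : ℕ) (α : ℕ → ℕ) : H →L[ℂ] H :=
  ((List.range m).map fun k => z (k + 1) ^ α (k + 1)).prod

open Function Set Submodule

theorem mul_pow_eq_smul_of_mul_eq_smul {R A : Type*} [CommSemiring R] [Semiring A] [Algebra R A]
    {T W : A} {c : R} (h : T * W = c • (W * T)) (e : ℕ) :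
    T * W ^ e = c ^ e • (W ^ e * T) := by
  induction e with
  | zero => simp
  | succ e ih =>
    rw [pow_succ, ← mul_assoc, ih, smul_mul_assoc, mul_assoc, h, mul_smul_comm, smul_smul,
      ← mul_assoc, ← pow_succ, ← pow_succ]

section Words

omit [CompleteSpace H]

variable (z : ℕ → H →L[ℂ] H)

theorem wordOp_succ (m : ℕ) (α : ℕ → ℕ) :
    wordOp z (m + 1) α = wordOp z m α * z (m + 1) ^ α (m + 1) := by
  simp [wordOp, List.range_succ]

variable {z}

theorem wordOp_congr {m : ℕ} {α β : ℕ → ℕ} (h : ∀ k, 1 ≤ k → k ≤ m → α k = β k) :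
    wordOp z m α = wordOp z m β := by
  induction m with
  | zero => rfl
  | succ m ih =>
    rw [wordOp_succ, wordOp_succ, ih fun k hk hkm => h k hk (by omega), h (m + 1) (by omega) le_rfl]

theorem wordOp_eq_one {m : ℕ} {α : ℕ → ℕ} (h : ∀ k, 1 ≤ k → k ≤ m → α k = 0) :
    wordOp z m α = 1 := by
  induction m with
  | zero => rfl
  | succ m ih =>
    rw [wordOp_succ, ih fun k hk hkm => h k hk (by omega), h (m + 1) (by omega) le_rfl,
      pow_zero, one_mul]

theorem wordOp_eq_pow_mul {m a : ℕ} {α : ℕ → ℕ} (ha : a < m)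
    (hα : ∀ k, 1 ≤ k → k ≤ a → α k = 0) :
    wordOp z m α = z (a + 1) ^ α (a + 1) * wordOp z m (update α (a + 1) 0) := by
  induction m with
  | zero => omega
  | succ m ih =>
    rw [wordOp_succ, wordOp_succ]
    rcases Nat.lt_succ_iff_lt_or_eq.mp ha with ha | rfl
    · rw [ih ha, update_of_ne (by omega), mul_assoc]
    · rw [wordOp_eq_one hα, wordOp_eq_one fun k hk hka => by
        rw [update_of_ne (by omega)]; exact hα k hk hka, update_self]
      simp

theorem mul_wordOp_eq_smul {m : ℕ} {α : ℕ → ℕ} {T : H →L[ℂ] H}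
    (hT : ∀ k, 1 ≤ k → k ≤ m → α k ≠ 0 → ∃ c : ℂ, T * z k = c • (z k * T)) :
    ∃ c : ℂ, T * wordOp z m α = c • (wordOp z m α * T) := by
  induction m with
  | zero => exact ⟨1, by simp [wordOp]⟩
  | succ m ih =>
    obtain ⟨c, hc⟩ := ih fun k hk hkm => hT k hk (by omega)
    obtain ⟨d, hd⟩ : ∃ d : ℂ, T * z (m + 1) ^ α (m + 1) = d • (z (m + 1) ^ α (m + 1) * T) := by
      by_cases h0 : α (m + 1) = 0
      · exact ⟨1, by simp [h0]⟩
      · obtain ⟨c', hc'⟩ := hT (m + 1) (by omega) le_rfl h0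
        exact ⟨_, mul_pow_eq_smul_of_mul_eq_smul hc' _⟩
    refine ⟨c * d, ?_⟩
    rw [wordOp_succ, ← mul_assoc, hc, smul_mul_assoc, mul_assoc, hd, mul_smul_comm, smul_smul,
      ← mul_assoc]

theorem mul_wordOp_eq_smul_update {m j : ℕ} {α : ℕ → ℕ} (hj : 1 ≤ j) (hjm : j ≤ m)
    (hcomm : ∀ k, 1 ≤ k → k < j → α k ≠ 0 → ∃ c : ℂ, z j * z k = c • (z k * z j)) :
    ∃ c : ℂ, z j * wordOp z m α = c • wordOp z m (update α j (α j + 1)) := by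
  induction m with
  | zero => omega
  | succ m ih =>
    rw [wordOp_succ, wordOp_succ, ← mul_assoc]
    rcases Nat.lt_succ_iff_lt_or_eq.mp (Nat.lt_succ_of_le hjm) with hjm | rfl
    · obtain ⟨c, hc⟩ := ih (by omega)
      exact ⟨c, by rw [hc, update_of_ne (by omega), smul_mul_assoc]⟩
    · obtain ⟨c, hc⟩ := mul_wordOp_eq_smul (m := m) (α := α) fun k hk hkm => hcomm k hk (by omega)
      refine ⟨c, ?_⟩
      rw [hc, wordOp_congr (β := update α (m + 1) (α (m + 1) + 1)) fun k _ hkm => by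
        rw [update_of_ne (by omega)], update_self, smul_mul_assoc, mul_assoc, ← pow_succ']

variable (z)

/-- `z_{a+1}^* ⋯ z_m^* K`, encoded by the words of length `m` whose first `a` exponents vanish. -/
def tailWordSpan (m : ℕ) (K : Submodule ℂ H) (a : ℕ) : Submodule ℂ H :=
  span ℂ {v | ∃ (α : ℕ → ℕ) (h : H), h ∈ K ∧ (∀ k, 1 ≤ k → k ≤ a → α k = 0) ∧
    v = wordOp z m α h}

def wordSpan (m : ℕ) (K : Submodule ℂ H) : Submodule ℂ H :=
  span ℂ {v | ∃ (α : ℕ → ℕ) (h : H), h ∈ K ∧ v = wordOp z m α h}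

variable {z} {m : ℕ} {K : Submodule ℂ H}

theorem tailWordSpan_zero : tailWordSpan z m K 0 = wordSpan z m K := by
  refine congrArg (span ℂ) (Set.ext fun v => ?_)
  exact ⟨fun ⟨α, h, hK, _, hv⟩ => ⟨α, h, hK, hv⟩,
    fun ⟨α, h, hK, hv⟩ => ⟨α, h, hK, fun k hk hk0 => by omega, hv⟩⟩

theorem wordOp_apply_mem_wordSpan (α : ℕ → ℕ) {h : H} (hh : h ∈ K) :
    wordOp z m α h ∈ wordSpan z m K :=
  subset_span ⟨α, h, hh, rfl⟩

theorem le_wordSpan : K ≤ wordSpan z m K := fun h hh => by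
  have := wordOp_apply_mem_wordSpan (z := z) (m := m) (fun _ => 0) hh
  rwa [wordOp_eq_one fun _ _ _ => rfl, one_apply_eq_self] at this

theorem tailWordSpan_le_wordSpan (a : ℕ) : tailWordSpan z m K a ≤ wordSpan z m K :=
  span_le.mpr fun _ ⟨α, _, hh, _, hv⟩ => hv ▸ wordOp_apply_mem_wordSpan α hh

theorem mapsTo_tailWordSpan {a : ℕ} {T : H →L[ℂ] H} {M : Submodule ℂ H}
    (hT : ∀ (α : ℕ → ℕ) (h : H), h ∈ K → (∀ k, 1 ≤ k → k ≤ a → α k = 0) →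
      T (wordOp z m α h) ∈ M) :
    MapsTo T (tailWordSpan z m K a) M := by
  refine fun v hv => (span_le (p := M.comap (T : H →ₗ[ℂ] H))).mpr ?_ hv
  rintro _ ⟨α, h, hh, hα, rfl⟩
  exact hT α h hh hα

theorem mapsTo_wordSpan {T : H →L[ℂ] H} {M : Submodule ℂ H}
    (hT : ∀ (α : ℕ → ℕ) (h : H), h ∈ K → T (wordOp z m α h) ∈ M) :
    MapsTo T (wordSpan z m K) M := by
  rw [← tailWordSpan_zero]
  exact mapsTo_tailWordSpan fun α h hh _ => hT α h hh

theorem mapsTo_pow {T : H →L[ℂ] H} {s : Set H} (hT : MapsTo T s s) (e : ℕ) :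
    MapsTo ⇑(T ^ e) s s := by
  rw [FunLike.coe_pow_eq_iterate]
  exact hT.iterate e

theorem tailWordSpan_le_of_pow {a : ℕ} (ha : a < m) {M : Submodule ℂ H}
    (hM : ∀ e, MapsTo ⇑(z (a + 1) ^ e) (tailWordSpan z m K (a + 1)) M) :
    tailWordSpan z m K a ≤ M :=
  span_le.mpr fun _ ⟨α, h, hh, hα, hv⟩ => by
    rw [hv, wordOp_eq_pow_mul ha hα, mul_apply_eq_comp]
    refine hM _ (subset_span ⟨_, h, hh, fun k hk hka => ?_, rfl⟩)
    rcases eq_or_ne k (a + 1) with rfl | hne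
    · exact update_self ..
    · rw [update_of_ne hne]
      exact hα k hk (by omega)

theorem wordSpan_le {M : Submodule ℂ H} (hK : K ≤ M)
    (hM : ∀ j, 1 ≤ j → j ≤ m → MapsTo (z j) M M) : wordSpan z m K ≤ M := by
  rw [← tailWordSpan_zero]
  suffices ∀ a ≤ m, tailWordSpan z m K a ≤ M from this 0 m.zero_le
  intro a ha
  induction ha using Nat.decreasingInduction with
  | self =>
    exact span_le.mpr fun _ ⟨α, h, hh, hα, hv⟩ => by
      rw [hv, wordOp_eq_one hα, one_apply_eq_self]
      exact hK hh
  | of_succ a ha ih =>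
    exact tailWordSpan_le_of_pow ha fun e =>
      (mapsTo_pow (hM (a + 1) (by omega) (by omega)) e).mono_left ih

theorem mapsTo_wordSpan_of_tailWordSpan {T : H →L[ℂ] H} {b : ℕ} (hb : b ≤ m)
    (hT : MapsTo T (tailWordSpan z m K b) (wordSpan z m K))
    (hcomm : ∀ a < b, ∃ c : ℂ, T * z (a + 1) = c • (z (a + 1) * T))
    (hinv : ∀ a < b, MapsTo (z (a + 1)) (wordSpan z m K) (wordSpan z m K)) :
    MapsTo T (wordSpan z m K) (wordSpan z m K) := by
  suffices ∀ a ≤ b, MapsTo T (tailWordSpan z m K a) (wordSpan z m K) by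
    simpa only [tailWordSpan_zero] using this 0 b.zero_le
  intro a ha
  induction ha using Nat.decreasingInduction with
  | self => exact hT
  | of_succ a ha ih =>
    obtain ⟨c, hc⟩ := hcomm a ha
    refine fun v hv => tailWordSpan_le_of_pow (M := (wordSpan z m K).comap (T : H →ₗ[ℂ] H))
      (by omega) (fun e u hu => ?_) hv
    change T ((z (a + 1) ^ e) u) ∈ wordSpan z m K
    rw [← mul_apply_eq_comp, mul_pow_eq_smul_of_mul_eq_smul hc, smul_apply, mul_apply_eq_comp]
    exact smul_mem _ _ (mapsTo_pow (hinv a ha) e (ih hu))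

end Words

section QQS

variable {q : ℝ} {n : ℕ} {z : ℕ → H →L[ℂ] H} {K : Submodule ℂ H}

theorem QQSRep.mapsTo_wordSpan_of_le (hz : QQSRep q n z) {j : ℕ} (hj : 1 ≤ j) (hjn : j ≤ n) :
    MapsTo (z j) (wordSpan z (2 * n - 1) K) (wordSpan z (2 * n - 1) K) := by
  refine mapsTo_wordSpan fun α h hh => ?_
  obtain ⟨c, hc⟩ := mul_wordOp_eq_smul_update (m := 2 * n - 1) (α := α) hj (by omega)
    fun k hk hkj _ => ⟨q, hz.r1 j k hk hkj (by omega) (by omega)⟩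
  rw [← mul_apply_eq_comp, hc, smul_apply]
  exact smul_mem _ _ (wordOp_apply_mem_wordSpan _ hh)

/-- `z i` `q`-commutes with every `z k`, `i′ < k < i`, and is then absorbed into `z_i^{α_i}`
(for `i = 2n` it passes through to `K`). -/
theorem QQSRep.mapsTo_tailWordSpan_dualIdx (hz : QQSRep q n z)
    (hK : ∀ h ∈ K, z (2 * n) h ∈ K) {i : ℕ} (hni : n < i) (hi : i ≤ 2 * n) :
    MapsTo (z i) (tailWordSpan z (2 * n - 1) K (dualIdx n i)) (wordSpan z (2 * n - 1) K) := by
  refine mapsTo_tailWordSpan fun α h hh hα => ?_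
  simp only [dualIdx] at hα
  have hcomm : ∀ k, 1 ≤ k → k < i → α k ≠ 0 → ∃ c : ℂ, z i * z k = c • (z k * z i) :=
    fun k hk hki hαk => ⟨q, hz.r1 i k hk hki hi fun hik => hαk (hα k hk (by omega))⟩
  rw [← mul_apply_eq_comp]
  rcases hi.lt_or_eq with hi | rfl
  · obtain ⟨c, hc⟩ := mul_wordOp_eq_smul_update (m := 2 * n - 1) (α := α) (by omega) (by omega)
      hcomm
    rw [hc, smul_apply]
    exact smul_mem _ _ (wordOp_apply_mem_wordSpan _ hh)
  · obtain ⟨c, hc⟩ := mul_wordOp_eq_smul (m := 2 * n - 1) (α := α) (T := z (2 * n))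
      fun k hk hkm => hcomm k hk (by omega)
    rw [hc, smul_apply, mul_apply_eq_comp]
    exact smul_mem _ _ (wordOp_apply_mem_wordSpan _ (hK h hh))

theorem QQSRep.mapsTo_wordSpan_of_lt (hz : QQSRep q n z) (hK : ∀ h ∈ K, z (2 * n) h ∈ K)
    {i : ℕ} (hni : n < i) (hi : i ≤ 2 * n) :
    MapsTo (z i) (wordSpan z (2 * n - 1) K) (wordSpan z (2 * n - 1) K) := by
  induction hb : 2 * n - i using Nat.strong_induction_on generalizing i with
  | _ b ih =>
  set S := wordSpan z (2 * n - 1) K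
  have hdual : dualIdx n i = b + 1 := by simp only [dualIdx]; omega
  have hupper : ∀ k, i < k → k ≤ 2 * n → MapsTo (z k) S S :=
    fun k hik hk => ih (2 * n - k) (by omega) (by omega) hk rfl
  -- `(R2)` moves `z i` to the right of `z i′`, at the cost of terms `z k z k′` with `k > i`
  have hpow : ∀ e, MapsTo ⇑(z (b + 1) ^ e) (tailWordSpan z (2 * n - 1) K (b + 1))
      (S.comap (z i : H →ₗ[ℂ] H)) := by
    intro e
    induction e with
    | zero =>
      intro u hu
      rw [pow_zero, one_apply_eq_self]
      exact hz.mapsTo_tailWordSpan_dualIdx hK hni hi (hdual ▸ hu)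
    | succ e ihe =>
      intro u hu
      have hyS : (z (b + 1) ^ e) u ∈ S :=
        mapsTo_pow (hz.mapsTo_wordSpan_of_le (by omega) (by omega)) e
          (tailWordSpan_le_wordSpan _ hu)
      change z i ((z (b + 1) ^ (e + 1)) u) ∈ S
      rw [pow_succ', mul_apply_eq_comp, ← mul_apply_eq_comp, ← hdual, hz.r2 i hni hi, hdual]
      simp only [sub_apply, smul_apply, sum_apply, mul_apply_eq_comp]
      refine sub_mem (smul_mem _ _ ?_) (smul_mem _ _ (sum_mem fun k hk => smul_mem _ _ ?_))
      · exact hz.mapsTo_wordSpan_of_le (by omega) (by omega) (ihe hu)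
      · obtain ⟨hik, hk⟩ := Finset.mem_Ioc.mp hk
        exact hupper k hik hk
          (hz.mapsTo_wordSpan_of_le (by simp only [dualIdx]; omega)
            (by simp only [dualIdx]; omega) hyS)
  refine mapsTo_wordSpan_of_tailWordSpan (b := b) (by omega)
    (fun v hv => tailWordSpan_le_of_pow (by omega) hpow hv)
    (fun a ha => ⟨q, hz.r1 i (a + 1) (by omega) (by omega) hi (by omega)⟩)
    (fun a ha => hz.mapsTo_wordSpan_of_le (by omega) (by omega))

theorem QQSRep.mapsTo_wordSpan (hz : QQSRep q n z) (hK : ∀ h ∈ K, z (2 * n) h ∈ K) {j : ℕ}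
    (hj : 1 ≤ j) (hjn : j ≤ 2 * n) :
    MapsTo (z j) (wordSpan z (2 * n - 1) K) (wordSpan z (2 * n - 1) K) := by
  rcases le_or_gt j n with hj' | hj'
  · exact hz.mapsTo_wordSpan_of_le hj hj'
  · exact hz.mapsTo_wordSpan_of_lt hK hj' hjn

/-- The relations (R3)–(R7) write `z i* z j` as a combination of operators `z a z b*` with
`b ≥ i`. -/
theorem QQSRep.adj_apply_apply_mem (hz : QQSRep q n z) {S : Submodule ℂ H}
    (hzS : ∀ j, 1 ≤ j → j ≤ 2 * n → MapsTo (z j) S S) {i j : ℕ} (hi : 1 ≤ i) (hin : i ≤ 2 * n)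
    (hj : 1 ≤ j) (hjn : j ≤ 2 * n) {v : H} (hv : ∀ l, i ≤ l → l ≤ 2 * n → adj (z l) v ∈ S) :
    adj (z i) (z j v) ∈ S := by
  have hza : ∀ a l, 1 ≤ a → a ≤ 2 * n → i ≤ l → l ≤ 2 * n → z a (adj (z l) v) ∈ S :=
    fun a l ha han hl hln => hzS a ha han (hv l hl hln)
  have hsum : ∀ k ∈ Finset.Ioc i (2 * n), z k (adj (z k) v) ∈ S := fun k hk => by
    obtain ⟨hik, hk⟩ := Finset.mem_Ioc.mp hk
    exact hza k k (by omega) hk hik.le hk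
  rw [← mul_apply_eq_comp]
  rcases eq_or_ne i j with rfl | hij
  · rcases le_or_gt i n with hin' | hni
    · rw [hz.r7 i hi hin']
      simp only [add_apply, smul_apply, sum_apply, mul_apply_eq_comp]
      exact add_mem (add_mem (hza i i hi hin le_rfl hin) (smul_mem _ _
        (hza _ _ (by simp only [dualIdx]; omega) (by simp only [dualIdx]; omega)
          (by simp only [dualIdx]; omega) (by simp only [dualIdx]; omega))))
        (smul_mem _ _ (sum_mem hsum))
    · rw [hz.r6 i hni hin]
      simp only [add_apply, smul_apply, sum_apply, mul_apply_eq_comp]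
      exact add_mem (hza i i hi hin le_rfl hin) (smul_mem _ _ (sum_mem hsum))
  rcases lt_trichotomy (i + j) (2 * n + 1) with hlt | heq | hgt
  · rw [hz.r5 i j hi hj hlt hij]
    simp only [add_apply, smul_apply, mul_apply_eq_comp]
    exact add_mem (smul_mem _ _ (hza j i hj hjn le_rfl hin)) (smul_mem _ _
      (hza _ _ (by simp only [dualIdx]; omega) (by simp only [dualIdx]; omega)
        (by simp only [dualIdx]; omega) (by simp only [dualIdx]; omega)))
  · obtain rfl : j = dualIdx n i := by simp only [dualIdx]; omega
    rw [hz.r3 i hi hin]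
    simp only [smul_apply, mul_apply_eq_comp]
    exact smul_mem _ _ (hza _ i hj hjn le_rfl hin)
  · rw [hz.r4 i j hi hin hj hjn hgt hij]
    simp only [smul_apply, mul_apply_eq_comp]
    exact smul_mem _ _ (hza j i hj hjn le_rfl hin)

theorem QQSRep.mapsTo_adj_wordSpan (hz : QQSRep q n z)
    (hK1 : ∀ h ∈ K, ∀ i, 1 ≤ i → i ≤ 2 * n - 1 → adj (z i) h = 0)
    (hK2 : ∀ h ∈ K, z (2 * n) h ∈ K ∧ adj (z (2 * n)) h ∈ K) {i : ℕ} (hi : 1 ≤ i)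
    (hin : i ≤ 2 * n) :
    MapsTo (adj (z i)) (wordSpan z (2 * n - 1) K) (wordSpan z (2 * n - 1) K) := by
  induction hb : 2 * n - i using Nat.strong_induction_on generalizing i with
  | _ b ih =>
  set S := wordSpan z (2 * n - 1) K
  have hzS : ∀ j, 1 ≤ j → j ≤ 2 * n → MapsTo (z j) S S :=
    fun j hj hjn => hz.mapsTo_wordSpan (fun h hh => (hK2 h hh).1) hj hjn
  have hupper : ∀ l, i < l → l ≤ 2 * n → MapsTo (adj (z l)) S S :=
    fun l hil hl => ih (2 * n - l) (by omega) (by omega) hl rfl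
  have hK : K ≤ S ⊓ S.comap (adj (z i) : H →ₗ[ℂ] H) := by
    refine fun h hh => ⟨le_wordSpan hh, ?_⟩
    rcases hin.lt_or_eq with hin | rfl
    · change adj (z i) h ∈ S
      rw [hK1 h hh i hi (by omega)]
      exact S.zero_mem
    · exact le_wordSpan (hK2 h hh).2
  refine fun v hv => (wordSpan_le hK (fun j hj hjm u hu => ⟨hzS j hj (by omega) hu.1, ?_⟩) hv).2
  refine hz.adj_apply_apply_mem hzS hi hin hj (by omega) fun l hil hl => ?_
  rcases hil.lt_or_eq with hil | rfl
  · exact hupper l hil hl hu.1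
  · exact hu.2

end QQS

theorem stmt_10_general (q : ℝ) (n : ℕ)
    (z : ℕ → H →L[ℂ] H) (hz : QQSRep q n z)
    (K : Submodule ℂ H)
    (hK1 : ∀ h ∈ K, ∀ i, 1 ≤ i → i ≤ 2 * n - 1 → adj (z i) h = 0)
    (hK2 : ∀ h ∈ K, z (2 * n) h ∈ K ∧ adj (z (2 * n)) h ∈ K) :
    ∀ i, 1 ≤ i → i ≤ 2 * n →
      ∀ v ∈ Submodule.span ℂ
          {v : H | ∃ (α : ℕ → ℕ) (h : H), h ∈ K ∧ v = wordOp z (2 * n - 1) α h},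
        z i v ∈ Submodule.span ℂ
            {v : H | ∃ (α : ℕ → ℕ) (h : H), h ∈ K ∧ v = wordOp z (2 * n - 1) α h} ∧
        adj (z i) v ∈ Submodule.span ℂ
            {v : H | ∃ (α : ℕ → ℕ) (h : H), h ∈ K ∧ v = wordOp z (2 * n - 1) α h} :=
  fun _ hi hin _ hv => ⟨hz.mapsTo_wordSpan (fun h hh => (hK2 h hh).1) hi hin hv,
    hz.mapsTo_adj_wordSpan hK1 hK2 hi hin hv⟩

theorem stmt_10 (q : ℝ) (hq0 : 0 < q) (hq1 : q < 1) (n : ℕ) (hn : 1 ≤ n)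
    (z : ℕ → H →L[ℂ] H) (hz : QQSRep q n z)
    (hirr : QQSIrreducible n z) (hz2n : z (2 * n) ≠ 0)
    (K : Submodule ℂ H)
    (hK1 : ∀ h ∈ K, ∀ i, 1 ≤ i → i ≤ 2 * n - 1 → adj (z i) h = 0)
    (hK2 : ∀ h ∈ K, z (2 * n) h ∈ K ∧ adj (z (2 * n)) h ∈ K) :
    ∀ i, 1 ≤ i → i ≤ 2 * n →
      ∀ v ∈ Submodule.span ℂ
          {v : H | ∃ (α : ℕ → ℕ) (h : H), h ∈ K ∧ v = wordOp z (2 * n - 1) α h},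
        z i v ∈ Submodule.span ℂ
            {v : H | ∃ (α : ℕ → ℕ) (h : H), h ∈ K ∧ v = wordOp z (2 * n - 1) α h} ∧
        adj (z i) v ∈ Submodule.span ℂ
            {v : H | ∃ (α : ℕ → ℕ) (h : H), h ∈ K ∧ v = wordOp z (2 * n - 1) α h} :=
  stmt_10_general q n z hz K hK1 hK2
end
end

section
/- Let z_1,…,z_{2n} be a representation of the quantum quaternion sphere relations on a complex Hilbert space H, and let [z_n, z_{n+1}] = z_n z_{n+1} − z_{n+1} z_n denote the commutator. Then for every i > n and every integer m ≥ 0, one has z_i* [z_n, z_{n+1}]^m = q^{2m} [z_n, z_{n+1}]^m z_i*. -/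
noncomputable section

variable {H : Type*} [NormedAddCommGroup H] [InnerProductSpace ℂ H] [CompleteSpace H]

/-!
For `i > n + 1`, relation (R4) makes `z_i*` commute with `z_n` and with `z_{n+1}` up to the
factor `q`, hence with both products `z_n z_{n+1}`, `z_{n+1} z_n` up to `q²`. For `i = n + 1`,
(R3) gives `z_{n+1}* z_n = q² z_n z_{n+1}*`, while (R6) says that `z_{n+1}*` commutes with
`z_{n+1}` up to the error term `(1 − q²) Σ_{k > n+1} z_k z_k*`; by (R1) and (R4) this error term
commutes with `z_n` up to `q²` as well, and so it cancels in the commutator. In both cases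
`z_i* C = q² C z_i*` for `C = [z_n, z_{n+1}]`, and the claim for `C^m` follows by induction.
-/

def SkewCommute {R A : Type*} [CommSemiring R] [Semiring A] [Algebra R A] (c : R) (a b : A) :
    Prop :=
  a * b = c • (b * a)

namespace SkewCommute

variable {R A : Type*} [CommSemiring R]

section Semiring

variable [Semiring A] [Algebra R A] {a a' b b' : A} {c d : R}

theorem mul_right (h : SkewCommute c a b) (h' : SkewCommute d a b') :
    SkewCommute (c * d) a (b * b') := by
  unfold SkewCommute at *
  rw [← mul_assoc, h, smul_mul_assoc, mul_assoc, h', mul_smul_comm, smul_smul, ← mul_assoc]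

theorem mul_left (h : SkewCommute c a b) (h' : SkewCommute d a' b) :
    SkewCommute (c * d) (a * a') b := by
  unfold SkewCommute at *
  rw [mul_assoc, h', mul_smul_comm, ← mul_assoc, h, smul_mul_assoc, smul_smul, mul_comm d,
    mul_assoc]

theorem pow_right (h : SkewCommute c a b) : ∀ m : ℕ, SkewCommute (c ^ m) a (b ^ m)
  | 0 => by simp [SkewCommute]
  | m + 1 => by simpa only [pow_succ] using (h.pow_right m).mul_right h

theorem smul_left (r : R) (h : SkewCommute c a b) : SkewCommute c (r • a) b := by
  unfold SkewCommute at *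
  rw [smul_mul_assoc, h, mul_smul_comm, smul_comm]

theorem sum_left {ι : Type*} (s : Finset ι) {f : ι → A} (h : ∀ k ∈ s, SkewCommute c (f k) b) :
    SkewCommute c (∑ k ∈ s, f k) b := by
  unfold SkewCommute at *
  rw [Finset.sum_mul, Finset.mul_sum, Finset.smul_sum]
  exact Finset.sum_congr rfl h

end Semiring

section Ring

variable [Ring A] [Algebra R A] {a b b' x : A} {c : R}

theorem sub_right (h : SkewCommute c a b) (h' : SkewCommute c a b') :
    SkewCommute c a (b - b') := by
  unfold SkewCommute at *
  rw [mul_sub, h, h', sub_mul, smul_sub]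

theorem commutator_right_of_mul_eq_add (h : SkewCommute c a b) (h' : a * b' = b' * a + x)
    (hx : SkewCommute c x b) : SkewCommute c a (b * b' - b' * b) := by
  unfold SkewCommute at *
  have hbb' : a * (b * b') = c • (b * b' * a) + c • (b * x) := by
    rw [← mul_assoc, h, smul_mul_assoc, mul_assoc, mul_assoc, h', mul_add, smul_add]
  have hb'b : a * (b' * b) = c • (b' * b * a) + c • (b * x) := by
    rw [← mul_assoc, h', add_mul, hx, mul_assoc, h, mul_smul_comm, mul_assoc]
  rw [mul_sub, hbb', hb'b, add_sub_add_right_eq_sub, sub_mul, smul_sub]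

end Ring

end SkewCommute

namespace QQSRep

variable {q : ℝ} {n : ℕ} {z : ℕ → H →L[ℂ] H}

theorem skewCommute_tail (hn : 1 ≤ n) (hz : QQSRep q n z) :
    SkewCommute ((q : ℂ) ^ 2) (∑ k ∈ Finset.Ioc (n + 1) (2 * n), z k * adj (z k)) (z n) := by
  refine SkewCommute.sum_left _ fun k hk => ?_
  rw [Finset.mem_Ioc] at hk
  rw [sq]
  exact SkewCommute.mul_left (hz.r1 k n hn (by omega) hk.2 (by omega))
    (hz.r4 k n (by omega) hk.2 hn (by omega) (by omega) (by omega))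

theorem skewCommute_adj_commutator (hn : 1 ≤ n) (hz : QQSRep q n z) {i : ℕ} (hi1 : n < i)
    (hi2 : i ≤ 2 * n) :
    SkewCommute ((q : ℂ) ^ 2) (adj (z i)) (z n * z (n + 1) - z (n + 1) * z n) := by
  obtain rfl | hi := (Nat.succ_le_of_lt hi1).eq_or_lt
  · have hdual : dualIdx n (n + 1) = n := by unfold dualIdx; omega
    have hz_n : SkewCommute ((q : ℂ) ^ 2) (adj (z (n + 1))) (z n) := by
      unfold SkewCommute
      simpa only [hdual] using hz.r3 (n + 1) (by omega) (by omega)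
    exact hz_n.commutator_right_of_mul_eq_add (hz.r6 (n + 1) (by omega) (by omega))
      ((hz.skewCommute_tail hn).smul_left _)
  · have hz_n : SkewCommute (q : ℂ) (adj (z i)) (z n) :=
      hz.r4 i n (by omega) hi2 hn (by omega) (by omega) (by omega)
    have hz_succ : SkewCommute (q : ℂ) (adj (z i)) (z (n + 1)) :=
      hz.r4 i (n + 1) (by omega) hi2 (by omega) (by omega) (by omega) (by omega)
    rw [sq]
    exact (hz_n.mul_right hz_succ).sub_right (hz_succ.mul_right hz_n)

end QQSRep

theorem stmt_15_general (q : ℝ) (n : ℕ) (hn : 1 ≤ n)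
    (z : ℕ → H →L[ℂ] H) (hz : QQSRep q n z) :
    ∀ i, n < i → i ≤ 2 * n → ∀ m : ℕ,
      adj (z i) * (z n * z (n + 1) - z (n + 1) * z n) ^ m
        = ((q : ℂ) ^ (2 * m)) •
            ((z n * z (n + 1) - z (n + 1) * z n) ^ m * adj (z i)) := by
  intro i hi1 hi2 m
  rw [pow_mul]
  exact (hz.skewCommute_adj_commutator hn hi1 hi2).pow_right m

theorem stmt_15 (q : ℝ) (hq0 : 0 < q) (hq1 : q < 1) (n : ℕ) (hn : 1 ≤ n)
    (z : ℕ → H →L[ℂ] H) (hz : QQSRep q n z) :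
    ∀ i, n < i → i ≤ 2 * n → ∀ m : ℕ,
      adj (z i) * (z n * z (n + 1) - z (n + 1) * z n) ^ m
        = ((q : ℂ) ^ (2 * m)) •
            ((z n * z (n + 1) - z (n + 1) * z n) ^ m * adj (z i)) :=
  stmt_15_general q n hn z hz
end
end

section
/- Fix an integer k with 1 ≤ k ≤ 2n and a complex number t with |t| = 1. Let z_1,…,z_{2n} on H and z′_1,…,z′_{2n} on H′ be two irreducible representations of the quantum quaternion sphere relations on nonzero complex Hilbert spaces such that z_j = 0 and z′_j = 0 for all j with k < j ≤ 2n. Suppose there are unit vectors u ∈ ⋂_{i=1}^{k−1} ker z_i* with z_k u = t u, and u′ ∈ ⋂_{i=1}^{k−1} ker (z′_i)* with z′_k u′ = t u′. Then the two representations are unitarily equivalent: there exists a unitary operator U : H → H′ such that U z_i = z′_i U for every i ∈ {1,…,2n}. -/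
noncomputable section

variable {H : Type*} [NormedAddCommGroup H] [InnerProductSpace ℂ H] [CompleteSpace H]

/-!
The vector `u` is cyclic (by irreducibility) and the state `T ↦ ⟪u, T u⟫` on words in the
`z i, (z i)*` does not depend on the representation. Indeed, `(z i)* u = 0` for `i < k` and for
`i > k` (where `z i = 0`), while `(z k)* u = conj t • u` because `z k` is normal by (R6)/(R7).
Relations (R3)–(R7) rewrite any `(z a)* z b` as a fixed combination of terms `z x (z y)*`, so
every word reduces to normally ordered ones, whose moments are products of these scalars. Equal
Gram matrices of the cyclic families `w(z) u` and `w(z') u'` then give the unitary `U` with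
`U (w(z) u) = w(z') u'`, which intertwines the two representations.
-/

namespace QQS

open ContinuousLinearMap

lemma adj_apply_eq_of_isStarNormal {E : Type*} [NormedAddCommGroup E] [InnerProductSpace ℂ E]
    [CompleteSpace E] {T : E →L[ℂ] E} (hT : IsStarNormal T) {x : E} {t : ℂ}
    (hx : T x = t • x) : adj T x = starRingEnd ℂ t • x := by
  have hnormal : IsStarNormal (T - t • 1) :=
    Commute.isStarNormal_sub (by simp [Commute, SemiconjBy, star_smul])
  have := (hnormal.adjoint_apply_eq_zero_iff x).mpr (by simp [hx])
  simpa [← star_eq_adjoint, star_sub, star_smul, sub_eq_zero, adj] using this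

section GramMatrix

variable {E F : Type*} [NormedAddCommGroup E] [InnerProductSpace ℂ E]
  [NormedAddCommGroup F] [InnerProductSpace ℂ F]

local notation "⟪" x ", " y "⟫" => @inner ℂ _ _ x y

lemma inner_linearCombination_eq_of_inner_eq {α : Type*} {v : α → E} {v' : α → F}
    (h : ∀ a b, ⟪v a, v b⟫ = ⟪v' a, v' b⟫) (x y : α →₀ ℂ) :
    ⟪Finsupp.linearCombination ℂ v x, Finsupp.linearCombination ℂ v y⟫ =
      ⟪Finsupp.linearCombination ℂ v' x, Finsupp.linearCombination ℂ v' y⟫ := by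
  simp only [Finsupp.linearCombination_apply, Finsupp.sum, sum_inner, inner_sum,
    inner_smul_left, inner_smul_right, h]

theorem exists_linearIsometryEquiv_of_inner_eq [CompleteSpace E] [CompleteSpace F] {α : Type*}
    {v : α → E} {v' : α → F}
    (h : ∀ a b, ⟪v a, v b⟫ = ⟪v' a, v' b⟫)
    (hv : Dense (Submodule.span ℂ (Set.range v) : Set E))
    (hv' : Dense (Submodule.span ℂ (Set.range v') : Set F)) :
    ∃ U : E ≃ₗᵢ[ℂ] F, ∀ a, U (v a) = v' a := by
  have hL : DenseRange (Finsupp.linearCombination ℂ v) := by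
    rwa [DenseRange, ← LinearMap.coe_range, Finsupp.range_linearCombination]
  have hL' : DenseRange (Finsupp.linearCombination ℂ v') := by
    rwa [DenseRange, ← LinearMap.coe_range, Finsupp.range_linearCombination]
  have hnorm (x : α →₀ ℂ) :
      ‖Finsupp.linearCombination ℂ v' x‖ = ‖Finsupp.linearCombination ℂ v x‖ := by
    rw [@norm_eq_sqrt_re_inner ℂ, @norm_eq_sqrt_re_inner ℂ,
      inner_linearCombination_eq_of_inner_eq h]
  refine ⟨(LinearEquiv.refl ℂ (α →₀ ℂ)).extendOfIsometry _ _ hL hL' hnorm,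
    fun a => ?_⟩
  simpa using LinearEquiv.extendOfIsometry_eq (LinearEquiv.refl ℂ _) _ _ hL hL' hnorm
    (Finsupp.single a 1)

end GramMatrix

section Words

variable {ι E F : Type*} [NormedAddCommGroup E] [InnerProductSpace ℂ E] [CompleteSpace E]
  [NormedAddCommGroup F] [InnerProductSpace ℂ F] [CompleteSpace F]

local notation "⟪" x ", " y "⟫" => @inner ℂ _ _ x y

/-- The letter `(i, true)` stands for `(z i)*` and `(i, false)` for `z i`. -/
def letterOp (z : ι → E →L[ℂ] E) (l : ι × Bool) : E →L[ℂ] E :=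
  if l.2 then adj (z l.1) else z l.1

def wordOp (z : ι → E →L[ℂ] E) (w : List (ι × Bool)) : E →L[ℂ] E :=
  (w.map (letterOp z)).prod

@[simp] lemma letterOp_false (z : ι → E →L[ℂ] E) (i : ι) : letterOp z (i, false) = z i := rfl

@[simp] lemma letterOp_true (z : ι → E →L[ℂ] E) (i : ι) : letterOp z (i, true) = adj (z i) :=
  rfl

@[simp] lemma wordOp_nil (z : ι → E →L[ℂ] E) : wordOp z [] = 1 := rfl

@[simp] lemma wordOp_cons (z : ι → E →L[ℂ] E) (l : ι × Bool) (w : List (ι × Bool)) :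
    wordOp z (l :: w) = letterOp z l * wordOp z w := rfl

@[simp] lemma wordOp_append (z : ι → E →L[ℂ] E) (v w : List (ι × Bool)) :
    wordOp z (v ++ w) = wordOp z v * wordOp z w := by
  simp [wordOp]

def adjWord (w : List (ι × Bool)) : List (ι × Bool) :=
  (w.map fun l => (l.1, !l.2)).reverse

lemma adj_wordOp (z : ι → E →L[ℂ] E) (w : List (ι × Bool)) :
    adj (wordOp z w) = wordOp z (adjWord w) := by
  simp only [adj, ← star_eq_adjoint]
  induction w with
  | nil => simp [adjWord]
  | cons l w ih =>
    obtain ⟨i, _ | _⟩ := l <;>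
      simp [adjWord, star_mul, ih, letterOp, adj, star_eq_adjoint]

lemma inner_wordOp_wordOp (z : ι → E →L[ℂ] E) (u : E) (v w : List (ι × Bool)) :
    ⟪wordOp z v u, wordOp z w u⟫ = ⟪u, wordOp z (adjWord v ++ w) u⟫ := by
  rw [wordOp_append, ← adj_wordOp, mul_apply_eq_comp, adj, adjoint_inner_right]

def inversions : List (ι × Bool) → ℕ
  | [] => 0
  | l :: w => (if l.2 then w.countP (fun m => !m.2) else 0) + inversions w

lemma inversions_append (v w : List (ι × Bool)) :
    inversions (v ++ w) =
      inversions v + inversions w + v.countP (·.2) * w.countP (fun m => !m.2) := by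
  induction v with
  | nil => simp [inversions]
  | cons l v ih =>
    rcases l with ⟨i, _ | _⟩
    · simp [inversions, ih]
    · simp only [List.cons_append, inversions, ↓reduceIte, List.countP_append, ih,
        List.countP_cons_of_pos]
      ring

def wordMeasure (w : List (ι × Bool)) : ℕ := w.length + inversions w

lemma wordMeasure_lt_cons (l : ι × Bool) (w : List (ι × Bool)) :
    wordMeasure w < wordMeasure (l :: w) := by
  rcases l with ⟨i, _ | _⟩ <;>
    simp only [wordMeasure, List.length_cons, inversions, Bool.false_eq_true, ↓reduceIte] <;> omega

lemma wordMeasure_lt_concat (w : List (ι × Bool)) (l : ι × Bool) :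
    wordMeasure w < wordMeasure (w ++ [l]) := by
  simp only [wordMeasure, inversions_append, List.length_append, List.length_singleton]
  omega

lemma wordMeasure_swap_lt (A B : List (ι × Bool)) (a b x y : ι) :
    wordMeasure (A ++ (x, false) :: (y, true) :: B) <
      wordMeasure (A ++ (a, true) :: (b, false) :: B) := by
  have h : ∀ l₁ l₂ : ι × Bool, A ++ l₁ :: l₂ :: B = A ++ [l₁, l₂] ++ B := by simp
  simp only [wordMeasure, h, inversions_append, List.length_append, List.countP_append]
  simp [inversions]

lemma word_cases (w : List (ι × Bool)) :
    w = [] ∨ (∃ i v, w = (i, false) :: v) ∨ (∃ v j, w = v ++ [(j, true)]) ∨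
      ∃ A a b B, w = A ++ (a, true) :: (b, false) :: B := by
  induction w with
  | nil => exact Or.inl rfl
  | cons l v ih =>
    obtain ⟨i, _ | _⟩ := l
    · exact Or.inr <| Or.inl ⟨i, v, rfl⟩
    right; right
    rcases ih with rfl | ⟨j, v, rfl⟩ | ⟨v, j, rfl⟩ | ⟨A, a, b, B, rfl⟩
    · exact Or.inl ⟨[], i, rfl⟩
    · exact Or.inr ⟨[], i, j, v, rfl⟩
    · exact Or.inl ⟨(i, true) :: v, j, rfl⟩
    · exact Or.inr ⟨(i, true) :: A, a, b, B, rfl⟩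

variable {z : ι → E →L[ℂ] E} {z' : ι → F →L[ℂ] F} {u : E} {u' : F}

/-- `R a b = [(c₁, x₁, y₁), …]` encodes the relation `(z a)* z b = ∑ cₖ • z xₖ (z yₖ)*`. -/
def NormalOrders (R : ι → ι → List (ℂ × ι × ι)) (z : ι → E →L[ℂ] E) : Prop :=
  ∀ a b, adj (z a) * z b = ((R a b).map fun r => r.1 • (z r.2.1 * adj (z r.2.2))).sum

lemma NormalOrders.wordOp_swap {R : ι → ι → List (ℂ × ι × ι)} (h : NormalOrders R z)
    (A B : List (ι × Bool)) (a b : ι) :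
    wordOp z (A ++ (a, true) :: (b, false) :: B) =
      ((R a b).map fun r => r.1 • wordOp z (A ++ (r.2.1, false) :: (r.2.2, true) :: B)).sum := by
  have hsplit : ∀ l₁ l₂ : ι × Bool,
      wordOp z (A ++ l₁ :: l₂ :: B) = wordOp z A * (letterOp z l₁ * letterOp z l₂) * wordOp z B :=
    fun _ _ => by simp [mul_assoc]
  simp only [hsplit, letterOp_true, letterOp_false, h a b]
  induction R a b with
  | nil => simp
  | cons r L ih => simp [ih, mul_add, add_mul]

lemma NormalOrders.inner_wordOp_swap {R : ι → ι → List (ℂ × ι × ι)} (h : NormalOrders R z)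
    (u : E) (A B : List (ι × Bool)) (a b : ι) :
    ⟪u, wordOp z (A ++ (a, true) :: (b, false) :: B) u⟫ =
      ((R a b).map fun r =>
        r.1 * ⟪u, wordOp z (A ++ (r.2.1, false) :: (r.2.2, true) :: B) u⟫).sum := by
  have := map_list_sum ((innerSL ℂ u).comp (ContinuousLinearMap.apply ℂ E u))
    ((R a b).map fun r => r.1 • wordOp z (A ++ (r.2.1, false) :: (r.2.2, true) :: B))
  simpa [h.wordOp_swap, Function.comp_def] using this

lemma inner_wordOp_cons_of_adj_eq {c : ι → ℂ} (hu : ∀ i, adj (z i) u = c i • u) (i : ι)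
    (w : List (ι × Bool)) :
    ⟪u, wordOp z ((i, false) :: w) u⟫ = starRingEnd ℂ (c i) * ⟪u, wordOp z w u⟫ := by
  rw [wordOp_cons, letterOp_false, mul_apply_eq_comp, ← adjoint_inner_left, ← adj, hu,
    inner_smul_left]

lemma inner_wordOp_concat_of_adj_eq {c : ι → ℂ} (hu : ∀ i, adj (z i) u = c i • u)
    (w : List (ι × Bool)) (j : ι) :
    ⟪u, wordOp z (w ++ [(j, true)]) u⟫ = c j * ⟪u, wordOp z w u⟫ := by
  simp [mul_apply_eq_comp, hu]

theorem inner_wordOp_eq_of_normalOrders {R : ι → ι → List (ℂ × ι × ι)} {c : ι → ℂ}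
    (hz : NormalOrders R z) (hz' : NormalOrders R z')
    (hu : ∀ i, adj (z i) u = c i • u) (hu' : ∀ i, adj (z' i) u' = c i • u')
    (hnorm : ‖u‖ = ‖u'‖) (w : List (ι × Bool)) :
    ⟪u, wordOp z w u⟫ = ⟪u', wordOp z' w u'⟫ := by
  induction hN : wordMeasure w using Nat.strong_induction_on generalizing w with
  | _ N ih =>
    subst hN
    rcases word_cases w with rfl | ⟨i, v, rfl⟩ | ⟨v, j, rfl⟩ | ⟨A, a, b, B, rfl⟩
    · simp [inner_self_eq_norm_sq_to_K, hnorm]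
    · rw [inner_wordOp_cons_of_adj_eq hu, inner_wordOp_cons_of_adj_eq hu',
        ih _ (wordMeasure_lt_cons _ v) v rfl]
    · rw [inner_wordOp_concat_of_adj_eq hu, inner_wordOp_concat_of_adj_eq hu',
        ih _ (wordMeasure_lt_concat v _) v rfl]
    · rw [hz.inner_wordOp_swap, hz'.inner_wordOp_swap]
      exact congrArg List.sum <| List.map_congr_left fun r _ =>
        congrArg _ (ih _ (wordMeasure_swap_lt A B a b _ _) _ rfl)

theorem exists_linearIsometryEquiv_intertwining
    (h : ∀ w, ⟪u, wordOp z w u⟫ = ⟪u', wordOp z' w u'⟫)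
    (hd : Dense (Submodule.span ℂ (Set.range fun w => wordOp z w u) : Set E))
    (hd' : Dense (Submodule.span ℂ (Set.range fun w => wordOp z' w u') : Set F)) :
    ∃ U : E ≃ₗᵢ[ℂ] F, ∀ i x, U (z i x) = z' i (U x) := by
  obtain ⟨U, hU⟩ := exists_linearIsometryEquiv_of_inner_eq
    (fun v w => by rw [inner_wordOp_wordOp, inner_wordOp_wordOp, h]) hd hd'
  refine ⟨U, fun i x => ?_⟩
  have hU_comp : (U.toContinuousLinearEquiv : E →L[ℂ] F).comp (z i) =
      (z' i).comp (U.toContinuousLinearEquiv : E →L[ℂ] F) := by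
    refine ContinuousLinearMap.ext_on hd ?_
    rintro _ ⟨w, rfl⟩
    simpa [hU w] using hU ((i, false) :: w)
  exact DFunLike.congr_fun hU_comp x

lemma letterOp_mem_topologicalClosure_span (z : ι → E →L[ℂ] E) (u : E) (l : ι × Bool)
    {x : E} (hx : x ∈ (Submodule.span ℂ (Set.range fun w => wordOp z w u)).topologicalClosure) :
    letterOp z l x ∈ (Submodule.span ℂ (Set.range fun w => wordOp z w u)).topologicalClosure := by
  set S := Submodule.span ℂ (Set.range fun w => wordOp z w u)
  have hS : S ≤ S.comap (letterOp z l : E →ₗ[ℂ] E) := by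
    refine Submodule.span_le.mpr ?_
    rintro _ ⟨w, rfl⟩
    exact Submodule.subset_span ⟨l :: w, by simp [mul_apply_eq_comp]⟩
  rw [← SetLike.mem_coe, Submodule.topologicalClosure_coe] at hx ⊢
  exact map_mem_closure (letterOp z l).continuous hx fun y hy => hS hy

end Words

section QuaternionSphere

variable {E : Type*} [NormedAddCommGroup E] [InnerProductSpace ℂ E]
  {q : ℝ} {n : ℕ} {z : ℕ → E →L[ℂ] E}

/-- The relations say nothing about `z i` outside `1 ≤ i ≤ 2n`; replacing those by `0` lets
words run over all letters. -/
def truncate (n : ℕ) (z : ℕ → E →L[ℂ] E) (i : ℕ) : E →L[ℂ] E :=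
  if 1 ≤ i ∧ i ≤ 2 * n then z i else 0

lemma truncate_of_mem {i : ℕ} (hi : 1 ≤ i ∧ i ≤ 2 * n) : truncate n z i = z i := if_pos hi

variable [CompleteSpace E]

/-- The branches are the relations (R3), (R6)/(R7), (R4) and (R5), read as rules rewriting
`(z a)* z b`. -/
def qqsRule (q : ℝ) (n a b : ℕ) : List (ℂ × ℕ × ℕ) :=
  if ¬(1 ≤ a ∧ a ≤ 2 * n ∧ 1 ≤ b ∧ b ≤ 2 * n) then []
  else if a + b = 2 * n + 1 then [((q : ℂ) ^ 2, b, a)]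
  else if a = b then
    ((1, a, a) :: if a ≤ n then
      [(((1 - q ^ 2 : ℝ) : ℂ) * (q : ℂ) ^ (2 * rhoIdx n a), dualIdx n a, dualIdx n a)] else []) ++
    (Finset.Ioc a (2 * n)).toList.map fun j => (((1 - q ^ 2 : ℝ) : ℂ), j, j)
  else if 2 * n + 1 < a + b then [((q : ℂ), b, a)]
  else [((q : ℂ), b, a), (((1 - q ^ 2 : ℝ) : ℂ) * ((epsIdx n a * epsIdx n b : ℤ) : ℂ) *
    (q : ℂ) ^ (rhoIdx n a + rhoIdx n b), dualIdx n a, dualIdx n b)]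

lemma mem_qqsRule {a b x y : ℕ} {c : ℂ} (hr : (c, x, y) ∈ qqsRule q n a b) :
    (1 ≤ x ∧ x ≤ 2 * n) ∧ 1 ≤ y ∧ y ≤ 2 * n := by
  simp only [qqsRule, dualIdx] at hr
  split_ifs at hr <;>
    simp only [List.cons_append, List.nil_append, List.mem_cons, List.mem_map, Finset.mem_toList,
      Finset.mem_Ioc, Prod.mk.injEq, List.not_mem_nil, or_false, ↓existsAndEq, true_and] at hr <;>
    omega

end QuaternionSphere

end QQS

namespace QQSRep

open QQS

variable {E : Type*} [NormedAddCommGroup E] [InnerProductSpace ℂ E] [CompleteSpace E]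
  {q : ℝ} {n : ℕ} {z : ℕ → E →L[ℂ] E}

lemma adj_mul_eq (hz : QQSRep q n z) {a b : ℕ} (ha : 1 ≤ a ∧ a ≤ 2 * n)
    (hb : 1 ≤ b ∧ b ≤ 2 * n) :
    adj (z a) * z b = ((qqsRule q n a b).map fun r => r.1 • (z r.2.1 * adj (z r.2.2))).sum := by
  have hab : 1 ≤ a ∧ a ≤ 2 * n ∧ 1 ≤ b ∧ b ≤ 2 * n := ⟨ha.1, ha.2, hb.1, hb.2⟩
  rw [qqsRule, if_neg (not_not_intro hab)]
  split_ifs with hdual hdiag hlow hup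
  · obtain rfl : b = dualIdx n a := by simp only [dualIdx]; omega
    simp [hz.r3 a ha.1 ha.2]
  · subst hdiag
    simp [hz.r7 a ha.1 hlow, Finset.smul_sum, add_assoc]
  · subst hdiag
    simp [hz.r6 a (by omega) ha.2, Finset.smul_sum]
  · simp [hz.r4 a b ha.1 ha.2 hb.1 hb.2 hup hdiag]
  · simp [hz.r5 a b ha.1 hb.1 (by omega) hdiag]

lemma normalOrders_truncate (hz : QQSRep q n z) :
    NormalOrders (qqsRule q n) (truncate n z) := by
  intro a b
  by_cases hab : 1 ≤ a ∧ a ≤ 2 * n ∧ 1 ≤ b ∧ b ≤ 2 * n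
  · rw [truncate_of_mem ⟨hab.1, hab.2.1⟩, truncate_of_mem hab.2.2,
      hz.adj_mul_eq ⟨hab.1, hab.2.1⟩ hab.2.2]
    refine congrArg List.sum <| List.map_congr_left fun ⟨c, x, y⟩ hr => ?_
    obtain ⟨hx, hy⟩ := mem_qqsRule hr
    rw [truncate_of_mem hx, truncate_of_mem hy]
  · have hzero : adj (truncate n z a) * truncate n z b = 0 := by
      by_cases ha : 1 ≤ a ∧ a ≤ 2 * n
      · simp [truncate, show ¬(1 ≤ b ∧ b ≤ 2 * n) by omega]
      · simp [truncate, ha, adj]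
    simp [qqsRule, hab, hzero]

lemma isStarNormal (hz : QQSRep q n z) {k : ℕ} (hk1 : 1 ≤ k) (hk2 : k ≤ 2 * n)
    (hzero : ∀ j, k < j → j ≤ 2 * n → z j = 0) : IsStarNormal (z k) := by
  have hsum : ∑ j ∈ Finset.Ioc k (2 * n), z j * adj (z j) = 0 :=
    Finset.sum_eq_zero fun j hj => by
      rw [Finset.mem_Ioc] at hj
      simp [hzero j hj.1 hj.2]
  rw [isStarNormal_iff, Commute, SemiconjBy, ContinuousLinearMap.star_eq_adjoint, ← adj]
  rcases le_or_gt k n with hkn | hkn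
  · rw [hz.r7 k hk1 hkn, hsum, hzero (dualIdx n k) (by simp only [dualIdx]; omega)
      (by simp only [dualIdx]; omega)]
    simp
  · rw [hz.r6 k hkn hk2, hsum]
    simp

lemma adj_truncate_apply (hz : QQSRep q n z) {k : ℕ} (hk1 : 1 ≤ k) (hk2 : k ≤ 2 * n)
    (hzero : ∀ j, k < j → j ≤ 2 * n → z j = 0) {u : E} {t : ℂ}
    (huk : ∀ i, 1 ≤ i → i ≤ k - 1 → adj (z i) u = 0) (hut : z k u = t • u) (i : ℕ) :
    adj (truncate n z i) u = (if i = k then starRingEnd ℂ t else 0) • u := by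
  by_cases hi : 1 ≤ i ∧ i ≤ 2 * n
  · rw [truncate_of_mem hi]
    rcases lt_trichotomy i k with h | rfl | h
    · simp [huk i hi.1 (by omega), h.ne]
    · simpa using adj_apply_eq_of_isStarNormal (hz.isStarNormal hk1 hk2 hzero) hut
    · simp [hzero i h hi.2, h.ne', adj]
  · simp [truncate, hi, adj, show i ≠ k by omega]

end QQSRep

namespace QQSIrreducible

open QQS

variable {E : Type*} [NormedAddCommGroup E] [InnerProductSpace ℂ E] [CompleteSpace E]
  {n : ℕ} {z : ℕ → E →L[ℂ] E}

theorem dense_span_wordOp_truncate (hirr : QQSIrreducible n z) {u : E} (hu : u ≠ 0) :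
    Dense (Submodule.span ℂ (Set.range fun w => wordOp (truncate n z) w u) : Set E) := by
  set S := Submodule.span ℂ (Set.range fun w => wordOp (truncate n z) w u)
  have huS : u ∈ S.topologicalClosure :=
    S.le_topologicalClosure (Submodule.subset_span ⟨[], by simp⟩)
  have hinv : ∀ i, 1 ≤ i → i ≤ 2 * n → ∀ x ∈ S.topologicalClosure,
      z i x ∈ S.topologicalClosure ∧ adj (z i) x ∈ S.topologicalClosure := fun i h1 h2 x hx => by
    simpa [truncate_of_mem ⟨h1, h2⟩] using
      And.intro (letterOp_mem_topologicalClosure_span _ u (i, false) hx)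
        (letterOp_mem_topologicalClosure_span _ u (i, true) hx)
  rcases hirr _ S.isClosed_topologicalClosure hinv with hbot | htop
  · exact absurd (by simpa [hbot] using huS) hu
  · exact Submodule.dense_iff_topologicalClosure_eq_top.mpr htop

end QQSIrreducible

open QQS

theorem stmt_19_general (q : ℝ) (n : ℕ)
    (k : ℕ) (hk1 : 1 ≤ k) (hk2 : k ≤ 2 * n) (t : ℂ)
    {H₁ H₂ : Type*}
    [NormedAddCommGroup H₁] [InnerProductSpace ℂ H₁] [CompleteSpace H₁]
    [NormedAddCommGroup H₂] [InnerProductSpace ℂ H₂] [CompleteSpace H₂]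
    (z : ℕ → H₁ →L[ℂ] H₁) (z' : ℕ → H₂ →L[ℂ] H₂)
    (hz : QQSRep q n z) (hz' : QQSRep q n z')
    (hirr : QQSIrreducible n z) (hirr' : QQSIrreducible n z')
    (hzero : ∀ j, k < j → j ≤ 2 * n → z j = 0)
    (hzero' : ∀ j, k < j → j ≤ 2 * n → z' j = 0)
    (u : H₁) (hu : ‖u‖ = 1)
    (huk : ∀ i, 1 ≤ i → i ≤ k - 1 → adj (z i) u = 0)
    (hut : z k u = t • u)
    (u' : H₂) (hu' : ‖u'‖ = 1)
    (huk' : ∀ i, 1 ≤ i → i ≤ k - 1 → adj (z' i) u' = 0)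
    (hut' : z' k u' = t • u') :
    ∃ U : H₁ ≃ₗᵢ[ℂ] H₂, ∀ i, 1 ≤ i → i ≤ 2 * n → ∀ h : H₁,
      U (z i h) = z' i (U h) := by
  have hmoments := inner_wordOp_eq_of_normalOrders hz.normalOrders_truncate
    hz'.normalOrders_truncate (hz.adj_truncate_apply hk1 hk2 hzero huk hut)
    (hz'.adj_truncate_apply hk1 hk2 hzero' huk' hut') (hu.trans hu'.symm)
  obtain ⟨U, hU⟩ := exists_linearIsometryEquiv_intertwining hmoments
    (hirr.dense_span_wordOp_truncate (norm_ne_zero_iff.mp (by simp [hu])))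
    (hirr'.dense_span_wordOp_truncate (norm_ne_zero_iff.mp (by simp [hu'])))
  exact ⟨U, fun i h1 h2 x => by simpa [truncate_of_mem ⟨h1, h2⟩] using hU i x⟩

theorem stmt_19 (q : ℝ) (hq0 : 0 < q) (hq1 : q < 1) (n : ℕ) (hn : 1 ≤ n)
    (k : ℕ) (hk1 : 1 ≤ k) (hk2 : k ≤ 2 * n) (t : ℂ) (ht : ‖t‖ = 1)
    {H₁ H₂ : Type*}
    [NormedAddCommGroup H₁] [InnerProductSpace ℂ H₁] [CompleteSpace H₁] [Nontrivial H₁]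
    [NormedAddCommGroup H₂] [InnerProductSpace ℂ H₂] [CompleteSpace H₂] [Nontrivial H₂]
    (z : ℕ → H₁ →L[ℂ] H₁) (z' : ℕ → H₂ →L[ℂ] H₂)
    (hz : QQSRep q n z) (hz' : QQSRep q n z')
    (hirr : QQSIrreducible n z) (hirr' : QQSIrreducible n z')
    (hzero : ∀ j, k < j → j ≤ 2 * n → z j = 0)
    (hzero' : ∀ j, k < j → j ≤ 2 * n → z' j = 0)
    (u : H₁) (hu : ‖u‖ = 1)
    (huk : ∀ i, 1 ≤ i → i ≤ k - 1 → adj (z i) u = 0)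
    (hut : z k u = t • u)
    (u' : H₂) (hu' : ‖u'‖ = 1)
    (huk' : ∀ i, 1 ≤ i → i ≤ k - 1 → adj (z' i) u' = 0)
    (hut' : z' k u' = t • u') :
    ∃ U : H₁ ≃ₗᵢ[ℂ] H₂, ∀ i, 1 ≤ i → i ≤ 2 * n → ∀ h : H₁,
      U (z i h) = z' i (U h) :=
  stmt_19_general q n k hk1 hk2 t z z' hz hz' hirr hirr' hzero hzero' u hu huk hut u' hu' huk' hut'
end
end
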